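/- arXiv:math/9811086 — 2 statements merged into one kernel-verified Lean document; each statement's English description precedes it below -/
import Mathlib

section
/- Let s ≥ 2 and n ≥ 1. The number of elements of F(s,n), i.e. the number of partitions of sn points placed in cyclic order on the boundary of a disc into n pairwise non-crossing blocks of size s (equivalently, the number of configurations of n non-intersecting s-spiders in the disc), equals f(s,n) = (1/((s-1)n+1)) · C(sn, n); equivalently, ((s-1)n+1) · |F(s,n)| = C(sn, n), where C(a,b) denotes the binomial coefficient. -/
/-- `b` lies strictly between `a` and `c` in the anticlockwise cyclic order on `Fin m`. -/
def CBtw {m : ℕ} (a b c : Fin m) : Prop :=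
  0 < (b - a).val ∧ (b - a).val < (c - a).val

/-- Two subsets of the cyclic points cross: some of their points strictly alternate
in the cyclic order. -/
def CrossSets {m : ℕ} (A B : Finset (Fin m)) : Prop :=
  ∃ a ∈ A, ∃ a' ∈ A, ∃ b ∈ B, ∃ b' ∈ B, CBtw a b a' ∧ CBtw a' b' a

/-- The boundary arc joining point `a` to point `a+1` lies inside the sector going
anticlockwise from `x` to `y`. -/
def ArcIn {m : ℕ} (x a y : Fin m) : Prop :=
  (a - x).val < (y - x).val

/-- The block `B` (i.e. the corresponding spider) separates the boundary arcs `a` and `b`. -/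
def Separates {m : ℕ} (B : Finset (Fin m)) (a b : Fin m) : Prop :=
  ∃ x ∈ B, ∃ y ∈ B, ArcIn x a y ∧ ArcIn y b x

/-- The boundary arcs `a` and `b` lie in the same region of the subdivision of the
disc determined by the spiders corresponding to the blocks of `C`. -/
def SameFace {m : ℕ} (C : Finset (Finset (Fin m))) (a b : Fin m) : Prop :=
  ∀ B ∈ C, ¬ Separates B a b

/-- The regions (faces) of the subdivision of the disc determined by the spiders
corresponding to `C`, each region identified with the set of boundary arcs it touches. -/
def Faces {m : ℕ} (C : Finset (Finset (Fin m))) : Set (Set (Fin m)) :=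
  {S | ∃ a, S = {b | SameFace C a b}}

/-- A configuration of `n` non-intersecting `s`-spiders in the disc, combinatorially:
a partition of the `sn` cyclic boundary points into `n` pairwise non-crossing blocks
of size `s`. -/
def IsSpiderConfig (s n : ℕ) (P : Finset (Finset (Fin (s * n)))) : Prop :=
  P.card = n ∧ (∀ B ∈ P, B.card = s) ∧
  (∀ B ∈ P, ∀ B' ∈ P, B ≠ B' → Disjoint B B') ∧
  (∀ x : Fin (s * n), ∃ B ∈ P, x ∈ B) ∧
  (∀ B ∈ P, ∀ B' ∈ P, B ≠ B' → ¬ CrossSets B B')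

/-- The color of the `p`-th of the `2(s-1)n` cyclic points: the points come in `2n`
consecutive blocks of `s-1` points each; odd-numbered blocks are colored `1,…,s-1`
in cyclic order and even-numbered blocks are colored `s-1,…,1`. -/
def ptColor (s p : ℕ) : ℕ :=
  if (p / (s - 1)) % 2 = 0 then p % (s - 1) + 1 else (s - 1) - p % (s - 1)

/-- A complete pairing: a non-crossing perfect matching of the `2(s-1)n` colored
cyclic points joining points of equal colors. -/
def IsPairing (s n : ℕ) (M : Finset (Finset (Fin (2 * (s - 1) * n)))) : Prop :=
  (∀ e ∈ M, ∃ a b : Fin (2 * (s - 1) * n),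
      e = {a, b} ∧ a ≠ b ∧ ptColor s (a : ℕ) = ptColor s (b : ℕ)) ∧
  (∀ e ∈ M, ∀ e' ∈ M, e ≠ e' → Disjoint e e') ∧
  (∀ x : Fin (2 * (s - 1) * n), ∃ e ∈ M, x ∈ e) ∧
  (∀ e ∈ M, ∀ e' ∈ M, e ≠ e' → ¬ CrossSets e e')

/-- A collection of `i` pairwise disjoint, pairwise non-crossing `s`-element blocks of
the `sn` cyclic points which extends to a partition of all the points into `n` pairwise
non-crossing `s`-blocks (a completable configuration of `i` non-intersecting spiders). -/
def IsCompletable (s n i : ℕ) (C : Finset (Finset (Fin (s * n)))) : Prop :=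
  C.card = i ∧ (∀ B ∈ C, B.card = s) ∧
  (∀ B ∈ C, ∀ B' ∈ C, B ≠ B' → Disjoint B B' ∧ ¬ CrossSets B B') ∧
  ∃ P, IsSpiderConfig s n P ∧ C ⊆ P


lemma sub_val_eq {m : ℕ} (a b : Fin m) :
    ((b - a : Fin m) : ℕ) = if (a:ℕ) ≤ (b:ℕ) then (b:ℕ) - (a:ℕ) else (b:ℕ) + m - (a:ℕ) := by
  have ha := a.isLt
  have hb := b.isLt
  rw [Fin.sub_def]
  simp only [Fin.val_mk]
  rcases le_or_gt (a:ℕ) (b:ℕ) with h | h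
  · rw [if_pos h]
    have h2 : m - (a:ℕ) + (b:ℕ) = ((b:ℕ) - (a:ℕ)) + m := by omega
    rw [h2, Nat.add_mod_right, Nat.mod_eq_of_lt (by omega)]
  · rw [if_neg (by omega), Nat.mod_eq_of_lt (by omega)]
    omega

lemma cbtw_iff {m : ℕ} (a b c : Fin m) :
    CBtw a b c ↔ (((a:ℕ) < b ∧ (b:ℕ) < c) ∨ ((b:ℕ) < c ∧ (c:ℕ) < a) ∨ ((c:ℕ) < a ∧ (a:ℕ) < b)) := by
  have ha := a.isLt
  have hb := b.isLt
  have hc := c.isLt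
  unfold CBtw
  rw [sub_val_eq, sub_val_eq]
  split_ifs <;> omega

instance {m : ℕ} (a b c : Fin m) : Decidable (CBtw a b c) := by
  unfold CBtw; infer_instance

instance {m : ℕ} (A B : Finset (Fin m)) : Decidable (CrossSets A B) := by
  unfold CrossSets; infer_instance

section maps
variable {m m' : ℕ} (f : Fin m → Fin m') (hf : ∀ x y : Fin m, (x:ℕ) < (y:ℕ) → (f x : ℕ) < (f y : ℕ))
include hf

lemma map_lt_iff (x y : Fin m) : (f x : ℕ) < (f y : ℕ) ↔ (x:ℕ) < (y:ℕ) := by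
  constructor
  · intro h
    rcases lt_trichotomy (x:ℕ) (y:ℕ) with h' | h' | h'
    · exact h'
    · exact absurd h (by simp [Fin.ext (show (x:ℕ) = y from h')])
    · exact absurd (hf y x h') (by omega)
  · exact hf x y

lemma cbtw_map_iff (a b c : Fin m) : CBtw (f a) (f b) (f c) ↔ CBtw a b c := by
  simp only [cbtw_iff, map_lt_iff f hf]

lemma cross_map_iff (A B : Finset (Fin m)) :
    CrossSets (A.image f) (B.image f) ↔ CrossSets A B := by
  constructor
  · rintro ⟨a, ha, a', ha', b, hb, b', hb', h1, h2⟩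
    simp only [Finset.mem_image] at ha ha' hb hb'
    obtain ⟨a0, ha0, rfl⟩ := ha
    obtain ⟨a1, ha1, rfl⟩ := ha'
    obtain ⟨b0, hb0, rfl⟩ := hb
    obtain ⟨b1, hb1, rfl⟩ := hb'
    exact ⟨a0, ha0, a1, ha1, b0, hb0, b1, hb1,
      (cbtw_map_iff f hf _ _ _).1 h1, (cbtw_map_iff f hf _ _ _).1 h2⟩
  · rintro ⟨a, ha, a', ha', b, hb, b', hb', h1, h2⟩
    exact ⟨f a, Finset.mem_image_of_mem f ha, f a', Finset.mem_image_of_mem f ha',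
      f b, Finset.mem_image_of_mem f hb, f b', Finset.mem_image_of_mem f hb',
      (cbtw_map_iff f hf _ _ _).2 h1, (cbtw_map_iff f hf _ _ _).2 h2⟩

lemma map_inj : Function.Injective f := by
  intro x y h
  rcases lt_trichotomy (x:ℕ) (y:ℕ) with h' | h' | h'
  · exact absurd (hf x y h') (by omega)
  · exact Fin.ext h'
  · exact absurd (hf y x h') (by omega)

end maps

/-- an interval of consecutive points crosses nothing disjoint from it -/
lemma interval_not_cross {m s : ℕ} (j : ℕ) (I B : Finset (Fin m))
    (hI : ∀ x : Fin m, x ∈ I ↔ j ≤ (x:ℕ) ∧ (x:ℕ) < j + s)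
    (hB : ∀ x ∈ B, x ∉ I) : ¬ CrossSets I B ∧ ¬ CrossSets B I := by
  constructor
  · rintro ⟨a, ha, a', ha', b, hb, b', hb', h1, h2⟩
    rw [hI] at ha ha'
    have hb1 : ¬(j ≤ (b:ℕ) ∧ (b:ℕ) < j + s) := fun h => (hB b hb) ((hI b).2 h)
    have hb2 : ¬(j ≤ (b':ℕ) ∧ (b':ℕ) < j + s) := fun h => (hB b' hb') ((hI b').2 h)
    rw [cbtw_iff] at h1 h2
    omega
  · rintro ⟨b, hb, b', hb', a, ha, a', ha', h1, h2⟩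
    rw [hI] at ha ha'
    have hb1 : ¬(j ≤ (b:ℕ) ∧ (b:ℕ) < j + s) := fun h => (hB b hb) ((hI b).2 h)
    have hb2 : ¬(j ≤ (b':ℕ) ∧ (b':ℕ) < j + s) := fun h => (hB b' hb') ((hI b').2 h)
    rw [cbtw_iff] at h1 h2
    omega


attribute [local instance 10] Classical.propDecidable

def minset {m : ℕ} (P : Finset (Finset (Fin m))) : Finset (Fin m) :=
  Finset.univ.filter (fun x => ∃ B ∈ P, x ∈ B ∧ ∀ y ∈ B, x ≤ y)

lemma mem_minset {m : ℕ} {P : Finset (Finset (Fin m))} {x : Fin m} :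
    x ∈ minset P ↔ ∃ B ∈ P, x ∈ B ∧ ∀ y ∈ B, x ≤ y := by
  simp [minset]

lemma card_interval {m : ℕ} (a t : ℕ) (h : a + t ≤ m) :
    (Finset.univ.filter (fun x : Fin m => a ≤ (x:ℕ) ∧ (x:ℕ) < a + t)).card = t := by
  have he : (Finset.univ.filter (fun x : Fin m => a ≤ (x:ℕ) ∧ (x:ℕ) < a + t))
      = (Finset.Ico a (a+t)).attachFin
          (fun x hx => lt_of_lt_of_le (Finset.mem_Ico.1 hx).2 h) := by
    ext x
    simp [Finset.mem_attachFin, Finset.mem_Ico]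
  rw [he, Finset.card_attachFin, Nat.card_Ico]
  omega

section minsetlemmas
variable {s n : ℕ} {P : Finset (Finset (Fin (s * n)))}

lemma block_nonempty (hs : 1 ≤ s) (hP : IsSpiderConfig s n P) {B : Finset (Fin (s*n))}
    (hB : B ∈ P) : B.Nonempty := by
  rw [← Finset.card_pos, hP.2.1 B hB]; omega

lemma min'_mem_minset (hs : 1 ≤ s) (hP : IsSpiderConfig s n P) {B : Finset (Fin (s*n))}
    (hB : B ∈ P) : B.min' (block_nonempty hs hP hB) ∈ minset P :=
  mem_minset.2 ⟨B, hB, B.min'_mem _, fun y hy => B.min'_le y hy⟩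

lemma minset_card (hs : 1 ≤ s) (hP : IsSpiderConfig s n P) : (minset P).card = n := by
  have hb : P.card = (minset P).card := ?_
  · rw [← hb]; exact hP.1
  refine (Finset.card_bij (fun B hB => B.min' (block_nonempty hs hP hB)) ?_ ?_ ?_)
  · intro B hB; exact min'_mem_minset hs hP hB
  · intro B1 h1 B2 h2 heq
    have heq' : B1.min' (block_nonempty hs hP h1) = B2.min' (block_nonempty hs hP h2) := heq
    by_contra hne
    exact Finset.disjoint_left.1 (hP.2.2.1 B1 h1 B2 h2 hne)
      (B1.min'_mem _) (heq' ▸ B2.min'_mem _)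
  · intro x hx
    obtain ⟨B, hB, hxB, hmin⟩ := mem_minset.1 hx
    exact ⟨B, hB, le_antisymm (B.min'_le x hxB) (hmin _ (B.min'_mem _))⟩

def minlt {m : ℕ} (k : ℕ) (B : Finset (Fin m)) : Prop :=
  ∃ x : Fin m, x ∈ B ∧ (x:ℕ) < k ∧ ∀ y ∈ B, x ≤ y

lemma minset_ballot (hs : 1 ≤ s) (hP : IsSpiderConfig s n P) :
    ∀ k, k ≤ s * n → k ≤ s * ((minset P).filter (fun x : Fin (s*n) => (x:ℕ) < k)).card := by
  intro k hk
  classical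
  have hK : (Finset.univ.filter (fun x : Fin (s*n) => (x:ℕ) < k)).card = k := by
    have := card_interval (m := s*n) 0 k (by omega)
    simpa using this
  have hKbi : Finset.univ.filter (fun x : Fin (s*n) => (x:ℕ) < k)
      = P.biUnion (fun B => B.filter (fun x : Fin (s*n) => (x:ℕ) < k)) := by
    ext x
    simp only [Finset.mem_filter, Finset.mem_univ, true_and, Finset.mem_biUnion]
    constructor
    · intro hx
      obtain ⟨B, hB, hxB⟩ := hP.2.2.2.1 x
      exact ⟨B, hB, hxB, hx⟩
    · rintro ⟨B, hB, hx, hxk⟩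
      exact hxk
  have hdisj2 : ∀ B1 ∈ P, ∀ B2 ∈ P, B1 ≠ B2 →
      Disjoint (B1.filter (fun x : Fin (s*n) => (x:ℕ) < k))
        (B2.filter (fun x : Fin (s*n) => (x:ℕ) < k)) := by
    intro B1 h1 B2 h2 hne
    exact Finset.disjoint_filter_filter (hP.2.2.1 B1 h1 B2 h2 hne)
  rw [hKbi, Finset.card_biUnion hdisj2] at hK
  have hsplit : (∑ B ∈ P.filter (fun B => minlt k B),
        (B.filter (fun x : Fin (s*n) => (x:ℕ) < k)).card)
      + ∑ B ∈ P.filter (fun B => ¬ minlt k B),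
        (B.filter (fun x : Fin (s*n) => (x:ℕ) < k)).card = k := by
    rw [Finset.sum_filter_add_sum_filter_not]
    exact hK
  have hzero : ∑ B ∈ P.filter (fun B => ¬ minlt k B),
      (B.filter (fun x : Fin (s*n) => (x:ℕ) < k)).card = 0 := by
    refine Finset.sum_eq_zero ?_
    intro B hB
    rw [Finset.card_eq_zero]
    by_contra hne
    obtain ⟨x, hx⟩ := Finset.nonempty_iff_ne_empty.2 hne
    rw [Finset.mem_filter] at hx hB
    have hBne : B.Nonempty := ⟨x, hx.1⟩
    refine hB.2 ⟨B.min' hBne, B.min'_mem _, ?_, fun y hy => B.min'_le y hy⟩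
    have h1 : ((B.min' hBne : Fin (s*n)) : ℕ) ≤ (x : ℕ) := B.min'_le x hx.1
    omega
  have hbound : ∑ B ∈ P.filter (fun B => minlt k B),
      (B.filter (fun x : Fin (s*n) => (x:ℕ) < k)).card
      ≤ (P.filter (fun B => minlt k B)).card * s := by
    refine le_trans (Finset.sum_le_sum ?_) (by rw [Finset.sum_const, smul_eq_mul])
    intro B hB
    calc (B.filter (fun x : Fin (s*n) => (x:ℕ) < k)).card
        ≤ B.card := Finset.card_filter_le _ _
      _ = s := hP.2.1 B (Finset.mem_filter.1 hB).1
  have hfq : (P.filter (fun B => minlt k B)).card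
      = ((minset P).filter (fun x : Fin (s*n) => (x:ℕ) < k)).card := by
    refine Finset.card_bij
      (fun B hB => B.min' (block_nonempty hs hP (Finset.mem_filter.1 hB).1)) ?_ ?_ ?_
    · intro B hB
      have hBf := Finset.mem_filter.1 hB
      obtain ⟨hBP, x, hxB, hxk, hxmin⟩ := hBf
      show B.min' (block_nonempty hs hP hBP) ∈
        (minset P).filter (fun x : Fin (s*n) => (x:ℕ) < k)
      refine Finset.mem_filter.2 ⟨min'_mem_minset hs hP hBP, ?_⟩
      have h1 : ((B.min' (block_nonempty hs hP hBP) : Fin (s*n)) : ℕ) ≤ (x : ℕ) :=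
        B.min'_le x hxB
      omega
    · intro B1 h1 B2 h2 heq
      have heq' : B1.min' (block_nonempty hs hP (Finset.mem_filter.1 h1).1)
          = B2.min' (block_nonempty hs hP (Finset.mem_filter.1 h2).1) := heq
      by_contra hne
      exact Finset.disjoint_left.1
        (hP.2.2.1 B1 (Finset.mem_filter.1 h1).1 B2 (Finset.mem_filter.1 h2).1 hne)
        (B1.min'_mem _) (heq' ▸ B2.min'_mem _)
    · intro x hx
      rw [Finset.mem_filter] at hx
      obtain ⟨B, hB, hxB, hmin⟩ := mem_minset.1 hx.1
      have hmem : B ∈ P.filter (fun B => minlt k B) :=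
        Finset.mem_filter.2 ⟨hB, x, hxB, hx.2, hmin⟩
      exact ⟨B, hmem, le_antisymm (B.min'_le x hxB) (hmin _ (B.min'_mem _))⟩
  have h1 : k ≤ ((minset P).filter (fun x : Fin (s*n) => (x:ℕ) < k)).card * s := by
    rw [← hfq]; omega
  exact h1.trans_eq (mul_comm _ s)

end minsetlemmas

lemma claimA {s n : ℕ} (hs : 1 ≤ s) {P : Finset (Finset (Fin (s * n)))}
    (hP : IsSpiderConfig s n P) (j : Fin (s * n))
    (hjmem : j ∈ minset P) (hmax : ∀ x ∈ minset P, x ≤ j) (hj : (j:ℕ) + s ≤ s * n) :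
    Finset.univ.filter (fun x : Fin (s*n) => (j:ℕ) ≤ (x:ℕ) ∧ (x:ℕ) < (j:ℕ) + s) ∈ P := by
  obtain ⟨B, hB, hjB, hjmin⟩ := mem_minset.1 hjmem
  have key : ∀ d, d < s → ∀ (hd : (j:ℕ) + d < s * n), (⟨(j:ℕ) + d, hd⟩ : Fin (s*n)) ∈ B := by
    intro d
    induction d with
    | zero =>
      intro _ hd
      have he : (⟨(j:ℕ) + 0, hd⟩ : Fin (s*n)) = j := Fin.ext (by simp)
      rw [he]; exact hjB
    | succ d ih =>
      intro hds hd
      have hdlt : (j:ℕ) + d < s * n := by omega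
      have htB : (⟨(j:ℕ) + d, hdlt⟩ : Fin (s*n)) ∈ B := ih (by omega) hdlt
      by_contra ht1
      obtain ⟨B', hB'P, ht1B'⟩ := hP.2.2.2.1 ⟨(j:ℕ) + (d+1), hd⟩
      have hBB' : B ≠ B' := by
        intro h; subst h; exact ht1 ht1B'
      have hm0mem : B'.min' (block_nonempty hs hP hB'P) ∈ minset P := min'_mem_minset hs hP hB'P
      have hm0j : B'.min' (block_nonempty hs hP hB'P) ≤ j := hmax _ hm0mem
      have hm0ne : (B'.min' (block_nonempty hs hP hB'P) : ℕ) ≠ (j:ℕ) := by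
        intro h
        exact Finset.disjoint_left.1 (hP.2.2.1 B hB B' hB'P hBB') hjB
          ((Fin.ext h.symm : j = B'.min' _) ▸ B'.min'_mem _)
      have hm0lt : (B'.min' (block_nonempty hs hP hB'P) : ℕ) < (j:ℕ) := by
        have := Fin.le_def.1 hm0j; omega
      have hcard1 : (B.filter (fun x : Fin (s*n) => (x:ℕ) ≤ (j:ℕ) + d)).card ≤ d + 1 := by
        have hsub : B.filter (fun x : Fin (s*n) => (x:ℕ) ≤ (j:ℕ) + d)
            ⊆ Finset.univ.filter (fun x : Fin (s*n) => (j:ℕ) ≤ (x:ℕ) ∧ (x:ℕ) < (j:ℕ) + (d+1)) := by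
          intro x hx
          rw [Finset.mem_filter] at hx ⊢
          refine ⟨Finset.mem_univ _, Fin.le_def.1 (hjmin x hx.1), by omega⟩
        calc (B.filter (fun x : Fin (s*n) => (x:ℕ) ≤ (j:ℕ) + d)).card
            ≤ _ := Finset.card_le_card hsub
          _ = d + 1 := card_interval _ _ (by omega)
      have hex : ∃ c ∈ B, ¬ ((c:ℕ) ≤ (j:ℕ) + d) := by
        by_contra hall
        push_neg at hall
        have hfeq : B.filter (fun x : Fin (s*n) => (x:ℕ) ≤ (j:ℕ) + d) = B :=
          Finset.filter_eq_self.2 (fun x hx => Nat.le_of_lt_succ (by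
            have := hall x hx; omega))
        rw [hfeq] at hcard1
        have := hP.2.1 B hB
        omega
      obtain ⟨c, hcB, hc⟩ := hex
      have hcne : (c:ℕ) ≠ (j:ℕ) + (d+1) := by
        intro h
        exact ht1 ((Fin.ext h : c = ⟨(j:ℕ)+(d+1), hd⟩) ▸ hcB)
      have hcval : (j:ℕ) + d + 2 ≤ (c:ℕ) := by omega
      apply hP.2.2.2.2 B hB B' hB'P hBB'
      refine ⟨j, hjB, c, hcB, ⟨(j:ℕ) + (d+1), hd⟩, ht1B',
        B'.min' (block_nonempty hs hP hB'P), B'.min'_mem _, ?_, ?_⟩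
      · rw [cbtw_iff]; left
        exact ⟨by simp, by simp; omega⟩
      · rw [cbtw_iff]; right; left
        exact ⟨hm0lt, by simp; omega⟩
  have hIcard : (Finset.univ.filter
      (fun x : Fin (s*n) => (j:ℕ) ≤ (x:ℕ) ∧ (x:ℕ) < (j:ℕ) + s)).card = s :=
    card_interval _ _ hj
  have hsub : Finset.univ.filter (fun x : Fin (s*n) => (j:ℕ) ≤ (x:ℕ) ∧ (x:ℕ) < (j:ℕ) + s) ⊆ B := by
    intro x hx
    rw [Finset.mem_filter] at hx
    have hx2 := hx.2
    have hk := key ((x:ℕ) - (j:ℕ)) (by omega) (by omega)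
    have he : (⟨(j:ℕ) + ((x:ℕ) - (j:ℕ)), by omega⟩ : Fin (s*n)) = x := Fin.ext (by simp; omega)
    rwa [he] at hk
  have heq : Finset.univ.filter (fun x : Fin (s*n) => (j:ℕ) ≤ (x:ℕ) ∧ (x:ℕ) < (j:ℕ) + s) = B :=
    Finset.eq_of_subset_of_card_le hsub (by rw [hP.2.1 B hB, hIcard])
  rw [heq]; exact hB

def BallotSet (s n : ℕ) (S : Finset (Fin (s * n))) : Prop :=
  S.card = n ∧ ∀ k, k ≤ s * n → k ≤ s * (S.filter (fun x : Fin (s*n) => (x:ℕ) < k)).card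

lemma master (s : ℕ) (hs : 1 ≤ s) :
    ∀ n, ∀ S : Finset (Fin (s * n)), BallotSet s n S →
      ∃! P : Finset (Finset (Fin (s * n))), IsSpiderConfig s n P ∧ minset P = S := by
  intro n
  induction n with
  | zero =>
    intro S hS
    have hempty : ∀ x : Fin (s * 0), False := fun x => by have := x.isLt; omega
    refine ⟨∅, ⟨⟨Finset.card_empty, ?_, ?_, ?_, ?_⟩, ?_⟩, ?_⟩
    · intro B hB; exact absurd hB (Finset.notMem_empty _)
    · intro B hB; exact absurd hB (Finset.notMem_empty _)
    · intro x; exact absurd (hempty x) id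
    · intro B hB; exact absurd hB (Finset.notMem_empty _)
    · refine Eq.trans (Finset.eq_empty_of_forall_notMem (fun x _ => hempty x)) ?_
      exact (Finset.eq_empty_of_forall_notMem (fun x _ => hempty x)).symm
    · intro Q hQ
      exact Finset.card_eq_zero.1 hQ.1.1
  | succ n ih =>
    intro S hS
    obtain ⟨hScard, hSb⟩ := hS
    have hSne : S.Nonempty := Finset.card_pos.1 (by omega)
    set j := S.max' hSne with hjdef
    have hjS : j ∈ S := S.max'_mem hSne
    have hjmax : ∀ x ∈ S, x ≤ j := fun x hx => S.le_max' x hx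
    have hmul : s * (n+1) = s * n + s := by ring
    have hjv : (j:ℕ) ≤ s * n := by
      have hb := hSb (j:ℕ) (by have := j.isLt; omega)
      have hfe : S.filter (fun x : Fin (s*(n+1)) => (x:ℕ) < (j:ℕ)) = S.erase j := by
        ext x
        simp only [Finset.mem_filter, Finset.mem_erase]
        constructor
        · rintro ⟨hx1, hx2⟩
          exact ⟨fun h => by rw [h] at hx2; omega, hx1⟩
        · rintro ⟨hne, hx⟩
          have := Fin.le_def.1 (hjmax x hx)
          have : (x:ℕ) ≠ (j:ℕ) := fun h => hne (Fin.ext h)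
          refine ⟨hx, by omega⟩
      rw [hfe, Finset.card_erase_of_mem hjS, hScard] at hb
      simp only [Nat.add_sub_cancel] at hb
      omega
    have hjsn : (j:ℕ) + s ≤ s * (n+1) := by omega
    set e : Fin (s*n) → Fin (s*(n+1)) := fun x =>
      if (x:ℕ) < (j:ℕ) then ⟨(x:ℕ), by have := x.isLt; omega⟩
      else ⟨(x:ℕ) + s, by have := x.isLt; omega⟩ with he
    have hev : ∀ x : Fin (s*n), (e x : ℕ) = if (x:ℕ) < (j:ℕ) then (x:ℕ) else (x:ℕ) + s := by
      intro x
      by_cases h : (x:ℕ) < (j:ℕ) <;> simp [he, h]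
    have hemono : ∀ x y : Fin (s*n), (x:ℕ) < (y:ℕ) → (e x : ℕ) < (e y : ℕ) := by
      intro x y h; rw [hev, hev]; split_ifs <;> omega
    have heinj : Function.Injective e := map_inj e hemono
    have hele : ∀ x y : Fin (s*n), e x ≤ e y ↔ x ≤ y := by
      intro x y
      rw [Fin.le_def, Fin.le_def]
      have h1 := map_lt_iff e hemono x y
      have h2 := map_lt_iff e hemono y x
      omega
    have henej : ∀ x, (e x : ℕ) ≠ (j:ℕ) := by
      intro x; rw [hev]; split_ifs <;> omega
    have herange : ∀ z : Fin (s*(n+1)), ((z:ℕ) < (j:ℕ) ∨ (j:ℕ) + s ≤ (z:ℕ)) → ∃ x, e x = z := by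
      intro z hz
      rcases hz with hz | hz
      · refine ⟨⟨(z:ℕ), by omega⟩, Fin.ext ?_⟩
        rw [hev]
        simp only [Fin.val_mk]
        rw [if_pos hz]
      · refine ⟨⟨(z:ℕ) - s, by have := z.isLt; omega⟩, Fin.ext ?_⟩
        rw [hev]
        simp only [Fin.val_mk]
        rw [if_neg (by omega)]
        omega
    have hrangeval : ∀ x : Fin (s*n), (e x : ℕ) < (j:ℕ) ∨ (j:ℕ) + s ≤ (e x : ℕ) := by
      intro x; rw [hev]; split_ifs <;> omega
    set I : Finset (Fin (s*(n+1))) :=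
      Finset.univ.filter (fun x : Fin (s*(n+1)) => (j:ℕ) ≤ (x:ℕ) ∧ (x:ℕ) < (j:ℕ) + s) with hI
    have hmemI : ∀ x : Fin (s*(n+1)), x ∈ I ↔ (j:ℕ) ≤ (x:ℕ) ∧ (x:ℕ) < (j:ℕ) + s := by
      intro x; simp [hI]
    have hjI : j ∈ I := (hmemI j).2 ⟨le_refl _, by omega⟩
    have hIcard : I.card = s := card_interval _ _ hjsn
    have heI : ∀ x : Fin (s*n), e x ∉ I := by
      intro x hx
      have := (hmemI _).1 hx
      have := hrangeval x
      omega
    set S' : Finset (Fin (s*n)) := Finset.univ.filter (fun x : Fin (s*n) => e x ∈ S) with hS'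
    have hmemS' : ∀ x : Fin (s*n), x ∈ S' ↔ e x ∈ S := by intro x; simp [hS']
    have hS'card : S'.card = n := by
      have hb : S'.card = (S.erase j).card := by
        refine Finset.card_bij (fun x _ => e x) ?_ ?_ ?_
        · intro x hx
          refine Finset.mem_erase.2 ⟨fun h => henej x (congrArg Fin.val h), (hmemS' x).1 hx⟩
        · intro x1 _ x2 _ h; exact heinj h
        · intro y hy
          rw [Finset.mem_erase] at hy
          have hyj : (y:ℕ) ≠ (j:ℕ) := fun h => hy.1 (Fin.ext h)
          have hyle := Fin.le_def.1 (hjmax y hy.2)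
          obtain ⟨x, hx⟩ := herange y (Or.inl (by omega))
          exact ⟨x, (hmemS' x).2 (hx ▸ hy.2), hx⟩
      rw [hb, Finset.card_erase_of_mem hjS, hScard]
      omega
    have hjvS : ∀ x ∈ S, x ≠ j → (x:ℕ) < (j:ℕ) := by
      intro x hx hne
      have := Fin.le_def.1 (hjmax x hx)
      have : (x:ℕ) ≠ (j:ℕ) := fun h => hne (Fin.ext h)
      omega
    -- the two filter identities
    have hfid1 : ∀ k : ℕ, k ≤ (j:ℕ) →
        S.filter (fun x : Fin (s*(n+1)) => (x:ℕ) < k)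
          = (S'.filter (fun x : Fin (s*n) => (x:ℕ) < k)).image e := by
      intro k hk
      ext x
      simp only [Finset.mem_filter, Finset.mem_image]
      constructor
      · rintro ⟨hxS, hxk⟩
        obtain ⟨y, hy⟩ := herange x (Or.inl (by omega))
        refine ⟨y, ⟨(hmemS' y).2 (hy ▸ hxS), ?_⟩, hy⟩
        have : (e y : ℕ) = (x:ℕ) := by rw [hy]
        rw [hev] at this
        split_ifs at this <;> omega
      · rintro ⟨y, ⟨hyS', hyk⟩, rfl⟩
        refine ⟨(hmemS' y).1 hyS', ?_⟩
        rw [hev]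
        split_ifs <;> omega
    have hfid2 : ∀ k : ℕ, (j:ℕ) < k →
        S.filter (fun x : Fin (s*(n+1)) => (x:ℕ) < k + s)
          = insert j ((S'.filter (fun x : Fin (s*n) => (x:ℕ) < k)).image e) := by
      intro k hk
      ext x
      simp only [Finset.mem_filter, Finset.mem_image, Finset.mem_insert]
      constructor
      · rintro ⟨hxS, hxk⟩
        by_cases hxj : x = j
        · exact Or.inl hxj
        · right
          have hxlt := hjvS x hxS hxj
          obtain ⟨y, hy⟩ := herange x (Or.inl (by omega))
          refine ⟨y, ⟨(hmemS' y).2 (hy ▸ hxS), ?_⟩, hy⟩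
          have : (e y : ℕ) = (x:ℕ) := by rw [hy]
          rw [hev] at this
          split_ifs at this <;> omega
      · rintro (rfl | ⟨y, ⟨hyS', hyk⟩, rfl⟩)
        · exact ⟨hjS, by omega⟩
        · refine ⟨(hmemS' y).1 hyS', ?_⟩
          rw [hev]
          split_ifs <;> omega
    have hS'ballot : ∀ k, k ≤ s * n →
        k ≤ s * (S'.filter (fun x : Fin (s*n) => (x:ℕ) < k)).card := by
      intro k hk
      by_cases hcase : k ≤ (j:ℕ)
      · have h1 := hSb k (by omega)
        rw [hfid1 k hcase, Finset.card_image_of_injective _ heinj] at h1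
        exact h1
      · have h1 := hSb (k + s) (by omega)
        rw [hfid2 k (by omega), Finset.card_insert_of_notMem, Finset.card_image_of_injective _ heinj] at h1
        · rw [Nat.mul_add, Nat.mul_one] at h1
          omega
        · intro hmem
          obtain ⟨y, _, hy⟩ := Finset.mem_image.1 hmem
          exact henej y (by rw [hy])
    obtain ⟨P', ⟨hP'cfg, hP'min⟩, hP'uniq⟩ := ih S' ⟨hS'card, hS'ballot⟩
    set lift : Finset (Fin (s*n)) → Finset (Fin (s*(n+1))) := fun B => B.image e with hlift
    have hliftcard : ∀ B, (lift B).card = B.card :=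
      fun B => Finset.card_image_of_injective _ heinj
    have hliftI : ∀ B, ∀ x ∈ lift B, x ∉ I := by
      rintro B x hx
      obtain ⟨y, _, rfl⟩ := Finset.mem_image.1 hx
      exact heI y
    set P : Finset (Finset (Fin (s*(n+1)))) := insert I (P'.image lift) with hP
    have hInotim : I ∉ P'.image lift := by
      intro hmem
      obtain ⟨B, _, hB⟩ := Finset.mem_image.1 hmem
      exact hliftI B j (hB ▸ hjI) hjI
    have hliftinj : Function.Injective lift := fun B1 B2 h => Finset.image_injective heinj h
    have hPcfg : IsSpiderConfig s (n+1) P := by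
      refine ⟨?_, ?_, ?_, ?_, ?_⟩
      · rw [hP, Finset.card_insert_of_notMem hInotim,
          Finset.card_image_of_injective _ hliftinj, hP'cfg.1]
      · intro B hB
        rw [hP, Finset.mem_insert] at hB
        rcases hB with rfl | hB
        · exact hIcard
        · obtain ⟨B', hB', rfl⟩ := Finset.mem_image.1 hB
          rw [hliftcard, hP'cfg.2.1 B' hB']
      · intro B hB B2 hB2 hne
        rw [hP, Finset.mem_insert] at hB hB2
        rcases hB with rfl | hB
        · rcases hB2 with rfl | hB2
          · exact absurd rfl hne
          · obtain ⟨B', hB', rfl⟩ := Finset.mem_image.1 hB2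
            exact Finset.disjoint_right.2 (fun x hx => hliftI B' x hx)
        · rcases hB2 with rfl | hB2
          · obtain ⟨B', hB', rfl⟩ := Finset.mem_image.1 hB
            exact Finset.disjoint_left.2 (fun x hx => hliftI B' x hx)
          · obtain ⟨B1', h1', rfl⟩ := Finset.mem_image.1 hB
            obtain ⟨B2', h2', rfl⟩ := Finset.mem_image.1 hB2
            have hne' : B1' ≠ B2' := fun h => hne (by rw [h])
            exact (Finset.disjoint_image heinj).2 (hP'cfg.2.2.1 B1' h1' B2' h2' hne')
      · intro x
        by_cases hx : x ∈ I
        · exact ⟨I, Finset.mem_insert_self _ _, hx⟩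
        · have hx' : (x:ℕ) < (j:ℕ) ∨ (j:ℕ) + s ≤ (x:ℕ) := by
            have h1 : ¬((j:ℕ) ≤ (x:ℕ) ∧ (x:ℕ) < (j:ℕ) + s) := fun hc => hx ((hmemI x).2 hc)
            omega
          obtain ⟨y, rfl⟩ := herange x hx'
          obtain ⟨B', hB', hyB'⟩ := hP'cfg.2.2.2.1 y
          exact ⟨lift B', Finset.mem_insert.2 (Or.inr (Finset.mem_image_of_mem lift hB')),
            Finset.mem_image_of_mem e hyB'⟩
      · intro B hB B2 hB2 hne
        rw [hP, Finset.mem_insert] at hB hB2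
        rcases hB with rfl | hB
        · rcases hB2 with rfl | hB2
          · exact absurd rfl hne
          · obtain ⟨B', hB', rfl⟩ := Finset.mem_image.1 hB2
            exact (interval_not_cross (j:ℕ) I (lift B') (fun x => hmemI x) (hliftI B')).1
        · rcases hB2 with rfl | hB2
          · obtain ⟨B', hB', rfl⟩ := Finset.mem_image.1 hB
            exact (interval_not_cross (j:ℕ) I (lift B') (fun x => hmemI x) (hliftI B')).2
          · obtain ⟨B1', h1', rfl⟩ := Finset.mem_image.1 hB
            obtain ⟨B2', h2', rfl⟩ := Finset.mem_image.1 hB2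
            have hne' : B1' ≠ B2' := fun h => hne (by rw [h])
            intro hcr
            exact hP'cfg.2.2.2.2 B1' h1' B2' h2' hne' ((cross_map_iff e hemono B1' B2').1 hcr)
    have hminP : minset P = S := by
      ext x
      rw [mem_minset]
      constructor
      · rintro ⟨B0, hB0, hxB0, hxmin⟩
        rw [hP, Finset.mem_insert] at hB0
        rcases hB0 with rfl | hB0
        · have h1 := (hmemI x).1 hxB0
          have h2 := Fin.le_def.1 (hxmin j hjI)
          have hxj : x = j := Fin.ext (by omega)
          rw [hxj]; exact hjS
        · obtain ⟨B', hB', rfl⟩ := Finset.mem_image.1 hB0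
          obtain ⟨y, hyB', rfl⟩ := Finset.mem_image.1 hxB0
          have hymin : y ∈ minset P' := mem_minset.2 ⟨B', hB', hyB', fun z hz =>
            (hele y z).1 (hxmin (e z) (Finset.mem_image_of_mem e hz))⟩
          rw [hP'min] at hymin
          exact (hmemS' y).1 hymin
      · intro hxS
        by_cases hxj : x = j
        · subst hxj
          refine ⟨I, Finset.mem_insert_self _ _, hjI, fun y hy => Fin.le_def.2 ?_⟩
          have := (hmemI y).1 hy
          omega
        · have hxlt := hjvS x hxS hxj
          obtain ⟨y, rfl⟩ := herange x (Or.inl hxlt)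
          have hyS' : y ∈ S' := (hmemS' y).2 hxS
          rw [← hP'min] at hyS'
          obtain ⟨B', hB', hyB', hymin⟩ := mem_minset.1 hyS'
          refine ⟨lift B', Finset.mem_insert.2 (Or.inr (Finset.mem_image_of_mem lift hB')),
            Finset.mem_image_of_mem e hyB', ?_⟩
          rintro z hz
          obtain ⟨w, hwB', rfl⟩ := Finset.mem_image.1 hz
          exact (hele y w).2 (hymin w hwB')
    refine ⟨P, ⟨hPcfg, hminP⟩, ?_⟩
    rintro Q ⟨hQcfg, hQmin⟩
    have hjmemQ : j ∈ minset Q := by rw [hQmin]; exact hjS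
    have hmaxQ : ∀ x ∈ minset Q, x ≤ j := by rw [hQmin]; exact hjmax
    have hIQ : I ∈ Q := by
      have hcA := claimA hs hQcfg j hjmemQ hmaxQ hjsn
      rw [hI]
      exact hcA
    have hQrange : ∀ B ∈ Q.erase I, ∀ x ∈ B, ((x:ℕ) < (j:ℕ) ∨ (j:ℕ) + s ≤ (x:ℕ)) := by
      intro B hB x hx
      rw [Finset.mem_erase] at hB
      have hdisj := hQcfg.2.2.1 B hB.2 I hIQ hB.1
      have hxI : x ∉ I := Finset.disjoint_left.1 hdisj hx
      have h1 : ¬((j:ℕ) ≤ (x:ℕ) ∧ (x:ℕ) < (j:ℕ) + s) := fun hc => hxI ((hmemI x).2 hc)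
      omega
    set pre : Finset (Fin (s*(n+1))) → Finset (Fin (s*n)) :=
      fun B => B.preimage e (heinj.injOn.mono (Set.subset_univ _)) with hpre
    have hmem_pre : ∀ (B : Finset (Fin (s*(n+1)))) (x : Fin (s*n)), x ∈ pre B ↔ e x ∈ B := by
      intro B x
      simp [hpre, Finset.mem_preimage]
    have hback : ∀ B ∈ Q.erase I, lift (pre B) = B := by
      intro B hB
      ext z
      simp only [hlift, hpre, Finset.mem_image]
      constructor
      · rintro ⟨y, hy, rfl⟩
        exact Finset.mem_preimage.1 hy
      · intro hz
        obtain ⟨y, rfl⟩ := herange z (hQrange B hB z hz)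
        exact ⟨y, Finset.mem_preimage.2 hz, rfl⟩
    set Q' := (Q.erase I).image pre with hQ'
    have hQ'cfg : IsSpiderConfig s n Q' := by
      have hpreinj : Set.InjOn pre (Q.erase I) := by
        intro B1 h1 B2 h2 hp
        rw [← hback B1 (Finset.mem_coe.1 h1), ← hback B2 (Finset.mem_coe.1 h2), hp]
      have hcard : Q'.card = n := by
        rw [hQ', Finset.card_image_of_injOn hpreinj, Finset.card_erase_of_mem hIQ, hQcfg.1]
        omega
      refine ⟨hcard, ?_, ?_, ?_, ?_⟩
      · intro B hB
        obtain ⟨B0, hB0, rfl⟩ := Finset.mem_image.1 hB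
        have hc := hliftcard (pre B0)
        rw [hback B0 hB0] at hc
        rw [← hc, hQcfg.2.1 B0 (Finset.mem_of_mem_erase hB0)]
      · intro B1 hB1 B2 hB2 hne
        obtain ⟨B01, h01, rfl⟩ := Finset.mem_image.1 hB1
        obtain ⟨B02, h02, rfl⟩ := Finset.mem_image.1 hB2
        have hne0 : B01 ≠ B02 := fun h => hne (by rw [h])
        have hd := hQcfg.2.2.1 B01 (Finset.mem_of_mem_erase h01) B02 (Finset.mem_of_mem_erase h02) hne0
        refine Finset.disjoint_left.2 (fun x hx1 hx2 => ?_)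
        exact Finset.disjoint_left.1 hd ((hmem_pre B01 x).1 hx1) ((hmem_pre B02 x).1 hx2)
      · intro x
        obtain ⟨B, hBQ, hxB⟩ := hQcfg.2.2.2.1 (e x)
        have hBne : B ≠ I := fun h => heI x (h ▸ hxB)
        have hBer : B ∈ Q.erase I := Finset.mem_erase.2 ⟨hBne, hBQ⟩
        exact ⟨pre B, Finset.mem_image_of_mem pre hBer, (hmem_pre B x).2 hxB⟩
      · intro B1 hB1 B2 hB2 hne
        obtain ⟨B01, h01, rfl⟩ := Finset.mem_image.1 hB1
        obtain ⟨B02, h02, rfl⟩ := Finset.mem_image.1 hB2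
        have hne0 : B01 ≠ B02 := fun h => hne (by rw [h])
        intro hcr
        have hcr2 := (cross_map_iff e hemono (pre B01) (pre B02)).2 hcr
        rw [show (pre B01).image e = B01 from hback B01 h01,
          show (pre B02).image e = B02 from hback B02 h02] at hcr2
        exact hQcfg.2.2.2.2 B01 (Finset.mem_of_mem_erase h01) B02 (Finset.mem_of_mem_erase h02)
          hne0 hcr2
    have hQ'min : minset Q' = S' := by
      ext x
      rw [mem_minset, hmemS']
      constructor
      · rintro ⟨B', hB', hxB', hxmin⟩
        obtain ⟨B0, h0, rfl⟩ := Finset.mem_image.1 hB'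
        have hexS : e x ∈ minset Q := mem_minset.2 ⟨B0, Finset.mem_of_mem_erase h0,
          (hmem_pre B0 x).1 hxB', by
            intro z hz
            obtain ⟨y, rfl⟩ := herange z (hQrange B0 h0 z hz)
            exact (hele x y).2 (hxmin y ((hmem_pre B0 y).2 hz))⟩
        rw [hQmin] at hexS
        exact hexS
      · intro hexS
        have hexm : e x ∈ minset Q := by rw [hQmin]; exact hexS
        obtain ⟨B0, hB0, hxB0, hxmin⟩ := mem_minset.1 hexm
        have hBne : B0 ≠ I := fun h => heI x (h ▸ hxB0)
        have h0 : B0 ∈ Q.erase I := Finset.mem_erase.2 ⟨hBne, hB0⟩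
        refine ⟨pre B0, Finset.mem_image_of_mem pre h0, (hmem_pre B0 x).2 hxB0, ?_⟩
        intro y hy
        exact (hele x y).1 (hxmin (e y) ((hmem_pre B0 y).1 hy))
    have hQP' : Q' = P' := hP'uniq Q' ⟨hQ'cfg, hQ'min⟩
    have h1 : Q'.image lift = Q.erase I := by
      rw [hQ', Finset.image_image]
      refine Eq.trans (Finset.image_congr ?_) Finset.image_id
      intro B hB
      simp only [Function.comp]
      exact hback B hB
    rw [hP, ← hQP', h1, Finset.insert_erase hIQ]

section cycle
variable (s n : ℕ)

def stp (T : Finset (Fin (s*n+1))) (p : ℕ) : ℤ :=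
  if (⟨p % (s*n+1), Nat.mod_lt p (Nat.succ_pos (s*n))⟩ : Fin (s*n+1)) ∈ T then (s:ℤ) - 1 else -1

def hgt (T : Finset (Fin (s*n+1))) (k : ℕ) : ℤ :=
  ∑ p ∈ Finset.range k, stp s n T p

lemma hgt_succ (T : Finset (Fin (s*n+1))) (k : ℕ) :
    hgt s n T (k+1) = hgt s n T k + stp s n T k := Finset.sum_range_succ _ _

lemma stp_add (T : Finset (Fin (s*n+1))) (k : ℕ) :
    stp s n T (k + (s*n+1)) = stp s n T k := by
  unfold stp
  congr 1
  simp [Nat.add_mod_right]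

lemma hgt_N (T : Finset (Fin (s*n+1))) (hT : T.card = n) (hs : 1 ≤ s) :
    hgt s n T (s*n+1) = -1 := by
  unfold hgt
  have h1 : ∑ p ∈ Finset.range (s*n+1), stp s n T p
      = ∑ i : Fin (s*n+1), (if i ∈ T then (s:ℤ) - 1 else -1) := by
    rw [← Fin.sum_univ_eq_sum_range (fun p => stp s n T p) (s*n+1)]
    refine Finset.sum_congr rfl ?_
    intro i _
    unfold stp
    congr 1
    · simp [Nat.mod_eq_of_lt i.isLt]
  rw [h1, Finset.sum_ite, Finset.sum_const, Finset.sum_const]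
  have h2 : Finset.univ.filter (fun i : Fin (s*n+1) => i ∈ T) = T := by
    ext i; simp
  have h3 : (Finset.univ.filter (fun i : Fin (s*n+1) => ¬ i ∈ T)).card = s*n+1 - n := by
    have h4 := Finset.card_filter_add_card_filter_not
      (s := (Finset.univ : Finset (Fin (s*n+1)))) (p := fun i => i ∈ T)
    rw [h2] at h4
    simp only [Finset.card_univ, Fintype.card_fin] at h4
    omega
  rw [h2, h3, hT]
  have hn : n ≤ s * n + 1 := by
    have := Nat.le_mul_of_pos_left n hs
    omega
  have hn' : n ≤ 1 + n * s := by
    have := Nat.mul_le_mul_left n hs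
    omega
  simp only [nsmul_eq_mul, smul_eq_mul]
  rw [Nat.cast_sub hn]
  push_cast
  ring
lemma hgt_add_N (T : Finset (Fin (s*n+1))) (hT : T.card = n) (hs : 1 ≤ s) :
    ∀ k, hgt s n T (k + (s*n+1)) = hgt s n T k - 1 := by
  intro k
  induction k with
  | zero =>
    have h0 : hgt s n T 0 = 0 := rfl
    simpa [h0] using hgt_N s n T hT hs
  | succ k ih =>
    have h1 : k + 1 + (s*n+1) = (k + (s*n+1)) + 1 := by ring
    rw [h1, hgt_succ, ih, stp_add, hgt_succ]
    ring

def GoodAt (T : Finset (Fin (s*n+1))) (r : ℕ) : Prop :=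
  ∀ jj, jj < s*n+1 → hgt s n T r ≤ hgt s n T (r + jj)

lemma goodat_lt_aux (T : Finset (Fin (s*n+1))) (hT : T.card = n) (hs : 1 ≤ s)
    (r1 r2 : ℕ) (h12 : r1 < r2) (h2N : r2 < s*n+1)
    (g1 : GoodAt s n T r1) (g2 : GoodAt s n T r2) : False := by
  have e1 : r1 + (r2 - r1) = r2 := by omega
  have h1 := g1 (r2 - r1) (by omega)
  rw [e1] at h1
  have e2 : r2 + (r1 + (s*n+1) - r2) = r1 + (s*n+1) := by omega
  have h2 := g2 (r1 + (s*n+1) - r2) (by omega)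
  rw [e2, hgt_add_N s n T hT hs] at h2
  omega

lemma goodat_unique (T : Finset (Fin (s*n+1))) (hT : T.card = n) (hs : 1 ≤ s)
    (r1 r2 : ℕ) (h1N : r1 < s*n+1) (h2N : r2 < s*n+1)
    (g1 : GoodAt s n T r1) (g2 : GoodAt s n T r2) : r1 = r2 := by
  rcases lt_trichotomy r1 r2 with h | h | h
  · exact absurd (goodat_lt_aux s n T hT hs r1 r2 h h2N g1 g2) id
  · exact h
  · exact absurd (goodat_lt_aux s n T hT hs r2 r1 h h1N g2 g1) id

lemma goodat_exists (T : Finset (Fin (s*n+1))) (hT : T.card = n) (hs : 1 ≤ s) :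
    ∃ r, r < s*n+1 ∧ GoodAt s n T r := by
  classical
  have hne : ((Finset.range (s*n+1)).image (hgt s n T)).Nonempty := by
    refine Finset.Nonempty.image ?_ _
    exact ⟨0, Finset.mem_range.2 (Nat.succ_pos _)⟩
  set M := ((Finset.range (s*n+1)).image (hgt s n T)).min' hne with hM
  have hfil : ((Finset.range (s*n+1)).filter (fun k => hgt s n T k = M)).Nonempty := by
    obtain ⟨k, hk, hkM⟩ := Finset.mem_image.1 (((Finset.range (s*n+1)).image (hgt s n T)).min'_mem hne)
    exact ⟨k, Finset.mem_filter.2 ⟨hk, hkM⟩⟩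
  set r := ((Finset.range (s*n+1)).filter (fun k => hgt s n T k = M)).min' hfil with hr
  have hrmem := ((Finset.range (s*n+1)).filter (fun k => hgt s n T k = M)).min'_mem hfil
  rw [Finset.mem_filter, Finset.mem_range] at hrmem
  have hMle : ∀ k, k < s*n+1 → M ≤ hgt s n T k := by
    intro k hk
    exact Finset.min'_le _ _ (Finset.mem_image_of_mem _ (Finset.mem_range.2 hk))
  have hleast : ∀ k, k < r → k < s*n+1 → hgt s n T k ≠ M := by
    intro k hkr hkN hkM
    have := Finset.min'_le ((Finset.range (s*n+1)).filter (fun k => hgt s n T k = M)) k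
      (Finset.mem_filter.2 ⟨Finset.mem_range.2 hkN, hkM⟩)
    omega
  refine ⟨r, hrmem.1, ?_⟩
  intro jj hjj
  rw [hrmem.2]
  by_cases hc : r + jj < s*n+1
  · exact hMle _ hc
  · have ht : r + jj = (r + jj - (s*n+1)) + (s*n+1) := by omega
    rw [ht, hgt_add_N s n T hT hs]
    have htr : r + jj - (s*n+1) < r := by omega
    have h5 := hMle (r + jj - (s*n+1)) (by omega)
    have h6 := hleast (r + jj - (s*n+1)) htr (by omega)
    omega

def cnt {m : ℕ} (X : Finset (Fin m)) (k : ℕ) : ℕ :=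
  (X.filter (fun x : Fin m => (x:ℕ) < k)).card

def GoodT (T : Finset (Fin (s*n+1))) : Prop :=
  ∀ k, k < s*n+1 → k ≤ s * cnt T k

end cycle

section bridge
variable (s n : ℕ)

lemma hgt_window (T : Finset (Fin (s*n+1))) (r jj : ℕ) :
    hgt s n T (r + jj) - hgt s n T r = ∑ i ∈ Finset.range jj, stp s n T (r + i) := by
  induction jj with
  | zero => simp
  | succ jj ih =>
    have h1 : r + (jj + 1) = (r + jj) + 1 := by ring
    rw [h1, hgt_succ, Finset.sum_range_succ, ← ih]
    ring

lemma fin_add_mk (N : ℕ) (r i : ℕ) (hr : r < N) (hi : i < N) (hN : 0 < N) :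
    ((⟨r, hr⟩ : Fin N) + ⟨i, hi⟩ : Fin N) = ⟨(r + i) % N, Nat.mod_lt _ hN⟩ := by
  rw [Fin.add_def]

lemma window_count (T : Finset (Fin (s*n+1))) (r jj : ℕ) (hr : r < s*n+1) (hjj : jj ≤ s*n+1) :
    ∑ i ∈ Finset.range jj, stp s n T (r + i)
      = ((s * (cnt (T.image (fun x => x - (⟨r, hr⟩ : Fin (s*n+1)))) jj) : ℕ) : ℤ) - (jj : ℤ) := by
  classical
  have hstp : ∀ i ∈ Finset.range jj, stp s n T (r + i)
      = if ((⟨r, hr⟩ : Fin (s*n+1)) + ⟨i % (s*n+1), Nat.mod_lt _ (Nat.succ_pos _)⟩ : Fin (s*n+1)) ∈ T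
        then (s:ℤ) - 1 else -1 := by
    intro i hi
    rw [Finset.mem_range] at hi
    have him : i % (s*n+1) = i := Nat.mod_eq_of_lt (by omega)
    have hfe : (⟨(r+i) % (s*n+1), Nat.mod_lt _ (Nat.succ_pos _)⟩ : Fin (s*n+1))
        = (⟨r, hr⟩ : Fin (s*n+1)) + ⟨i % (s*n+1), Nat.mod_lt _ (Nat.succ_pos _)⟩ := by
      rw [Fin.add_def]
      apply Fin.ext
      simp [him]
    unfold stp
    rw [hfe]
  rw [Finset.sum_congr rfl hstp, Finset.sum_ite, Finset.sum_const, Finset.sum_const]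
  set pred : ℕ → Prop := fun i =>
    ((⟨r, hr⟩ : Fin (s*n+1)) + ⟨i % (s*n+1), Nat.mod_lt _ (Nat.succ_pos _)⟩ : Fin (s*n+1)) ∈ T
    with hpred
  have hcount : ((Finset.range jj).filter (fun i => pred i)).card
      = cnt (T.image (fun x => x - (⟨r, hr⟩ : Fin (s*n+1)))) jj := by
    unfold cnt
    refine Finset.card_bij
      (fun i _ => (⟨i % (s*n+1), Nat.mod_lt _ (Nat.succ_pos _)⟩ : Fin (s*n+1))) ?_ ?_ ?_
    · intro i hi
      rw [Finset.mem_filter, Finset.mem_range] at hi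
      have him : i % (s*n+1) = i := Nat.mod_eq_of_lt (by omega)
      rw [Finset.mem_filter]
      constructor
      · rw [Finset.mem_image]
        refine ⟨(⟨r, hr⟩ : Fin (s*n+1)) + ⟨i % (s*n+1), Nat.mod_lt _ (Nat.succ_pos _)⟩, hi.2, ?_⟩
        rw [add_sub_cancel_left]
      · simp [him]
        omega
    · intro i1 h1 i2 h2 heq
      rw [Finset.mem_filter, Finset.mem_range] at h1 h2
      have := congrArg Fin.val heq
      simp only [Fin.val_mk] at this
      rwa [Nat.mod_eq_of_lt (by omega), Nat.mod_eq_of_lt (by omega)] at this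
    · intro y hy
      rw [Finset.mem_filter, Finset.mem_image] at hy
      obtain ⟨⟨x, hxT, hxy⟩, hylt⟩ := hy
      refine ⟨(y:ℕ), Finset.mem_filter.2 ⟨Finset.mem_range.2 hylt, ?_⟩, ?_⟩
      · show ((⟨r, hr⟩ : Fin (s*n+1)) + ⟨(y:ℕ) % (s*n+1), Nat.mod_lt _ (Nat.succ_pos _)⟩ ∈ T)
        have hyval : ((y:ℕ) % (s*n+1)) = (y:ℕ) := Nat.mod_eq_of_lt y.isLt
        have hfin : (⟨(y:ℕ) % (s*n+1), Nat.mod_lt _ (Nat.succ_pos _)⟩ : Fin (s*n+1)) = y :=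
          Fin.ext (by simp [hyval])
        rw [hfin, ← hxy]
        have hcanc : (⟨r, hr⟩ : Fin (s*n+1)) + (x - ⟨r, hr⟩) = x := by simp
        rw [hcanc]
        exact hxT
      · apply Fin.ext
        simp [Nat.mod_eq_of_lt y.isLt]
  rw [hcount]
  have hcle : cnt (T.image (fun x => x - (⟨r, hr⟩ : Fin (s*n+1)))) jj ≤ jj := by
    rw [← hcount]
    calc ((Finset.range jj).filter (fun i => pred i)).card
        ≤ (Finset.range jj).card := Finset.card_filter_le _ _
      _ = jj := Finset.card_range jj
  have hneg : ((Finset.range jj).filter (fun i => ¬ pred i)).card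
      = jj - cnt (T.image (fun x => x - (⟨r, hr⟩ : Fin (s*n+1)))) jj := by
    have h4 := Finset.card_filter_add_card_filter_not
      (s := Finset.range jj) (p := fun i => pred i)
    rw [hcount, Finset.card_range] at h4
    omega
  rw [hneg]
  simp only [nsmul_eq_mul, smul_eq_mul]
  rw [Nat.cast_sub hcle]
  push_cast
  ring

lemma bridge (T : Finset (Fin (s*n+1))) (r : ℕ) (hr : r < s*n+1) :
    GoodT s n (T.image (fun x => x - (⟨r, hr⟩ : Fin (s*n+1)))) ↔ GoodAt s n T r := by
  unfold GoodT GoodAt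
  constructor
  · intro H jj hjj
    have hid := hgt_window s n T r jj
    rw [window_count s n T r jj hr (le_of_lt hjj)] at hid
    have h2 := H jj hjj
    have h3 : (jj:ℤ) ≤ ((s * cnt (T.image (fun x => x - (⟨r, hr⟩ : Fin (s*n+1)))) jj : ℕ) : ℤ) := by
      exact_mod_cast h2
    omega
  · intro H k hk
    have hid := hgt_window s n T r k
    rw [window_count s n T r k hr (le_of_lt hk)] at hid
    have h2 := H k hk
    have h3 : (k:ℤ) ≤ ((s * cnt (T.image (fun x => x - (⟨r, hr⟩ : Fin (s*n+1)))) k : ℕ) : ℤ) := by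
      omega
    exact_mod_cast h3

end bridge

section counting
variable (s n : ℕ)

lemma rot_cancel1 (G : Finset (Fin (s*n+1))) (t : Fin (s*n+1)) :
    (G.image (fun x => x + t)).image (fun x => x - t) = G := by
  rw [Finset.image_image]
  refine Eq.trans (Finset.image_congr ?_) Finset.image_id
  intro x _
  simp only [Function.comp, id]
  simp

lemma rot_cancel2 (G : Finset (Fin (s*n+1))) (t : Fin (s*n+1)) :
    (G.image (fun x => x - t)).image (fun x => x + t) = G := by
  rw [Finset.image_image]
  refine Eq.trans (Finset.image_congr ?_) Finset.image_id
  intro x _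
  simp only [Function.comp, id]
  simp

lemma add_inj (t : Fin (s*n+1)) : Function.Injective (fun x : Fin (s*n+1) => x + t) := by
  intro a b h
  simpa using congrArg (fun z => z - t) h

lemma sub_inj (t : Fin (s*n+1)) : Function.Injective (fun x : Fin (s*n+1) => x - t) := by
  intro a b h
  simpa using congrArg (fun z => z + t) h

lemma count_eq (hs : 1 ≤ s) :
    (Finset.univ.filter (fun T : Finset (Fin (s*n+1)) => T.card = n)).card
      = (Finset.univ.filter (fun T : Finset (Fin (s*n+1)) => T.card = n ∧ GoodT s n T)).card
        * (s*n+1) := by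
  classical
  have hprod : ((Finset.univ.filter
        (fun T : Finset (Fin (s*n+1)) => T.card = n ∧ GoodT s n T))
        ×ˢ (Finset.univ : Finset (Fin (s*n+1)))).card
      = (Finset.univ.filter
          (fun T : Finset (Fin (s*n+1)) => T.card = n ∧ GoodT s n T)).card * (s*n+1) := by
    rw [Finset.card_product, Finset.card_univ, Fintype.card_fin]
  rw [← hprod]
  refine (Finset.card_bij (fun p _ => p.1.image (fun x => x + p.2)) ?_ ?_ ?_).symm
  · rintro ⟨G, t⟩ hp
    rw [Finset.mem_product, Finset.mem_filter] at hp
    rw [Finset.mem_filter]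
    exact ⟨Finset.mem_univ _, by
      rw [Finset.card_image_of_injective _ (add_inj s n t)]
      exact hp.1.2.1⟩
  · rintro ⟨G1, t1⟩ hp1 ⟨G2, t2⟩ hp2 heq
    rw [Finset.mem_product, Finset.mem_filter] at hp1 hp2
    simp only at heq
    set T := G1.image (fun x => x + t1) with hT
    have hT2 : T = G2.image (fun x => x + t2) := heq
    have hTcard : T.card = n := by
      rw [hT, Finset.card_image_of_injective _ (add_inj s n t1)]
      exact hp1.1.2.1
    have hG1 : G1 = T.image (fun x => x - t1) := (rot_cancel1 s n G1 t1).symm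
    have hG2 : G2 = T.image (fun x => x - t2) := by
      rw [hT2]
      exact (rot_cancel1 s n G2 t2).symm
    have hg1 : GoodAt s n T (t1:ℕ) := by
      rw [← bridge s n T (t1:ℕ) t1.isLt]
      have : (⟨(t1:ℕ), t1.isLt⟩ : Fin (s*n+1)) = t1 := Fin.ext rfl
      rw [this, ← hG1]
      exact hp1.1.2.2
    have hg2 : GoodAt s n T (t2:ℕ) := by
      rw [← bridge s n T (t2:ℕ) t2.isLt]
      have : (⟨(t2:ℕ), t2.isLt⟩ : Fin (s*n+1)) = t2 := Fin.ext rfl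
      rw [this, ← hG2]
      exact hp2.1.2.2
    have htt : t1 = t2 := Fin.ext (goodat_unique s n T hTcard hs _ _ t1.isLt t2.isLt hg1 hg2)
    have hGG : G1 = G2 := by
      rw [hG1, hG2, htt, hT2]
    rw [htt, hGG]
  · intro T hT
    rw [Finset.mem_filter] at hT
    obtain ⟨r, hrN, hgood⟩ := goodat_exists s n T hT.2 hs
    refine ⟨⟨T.image (fun x => x - (⟨r, hrN⟩ : Fin (s*n+1))), ⟨r, hrN⟩⟩, ?_, ?_⟩
    · rw [Finset.mem_product, Finset.mem_filter]
      refine ⟨⟨Finset.mem_univ _, ?_, ?_⟩, Finset.mem_univ _⟩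
      · rw [Finset.card_image_of_injective _ (sub_inj s n _)]
        exact hT.2
      · rw [bridge s n T r hrN]
        exact hgood
    · exact rot_cancel2 s n T _

lemma all_eq_choose :
    (Finset.univ.filter (fun T : Finset (Fin (s*n+1)) => T.card = n)).card
      = Nat.choose (s*n+1) n := by
  classical
  have h1 : Finset.univ.filter (fun T : Finset (Fin (s*n+1)) => T.card = n)
      = Finset.powersetCard n (Finset.univ : Finset (Fin (s*n+1))) := by
    ext T
    simp [Finset.mem_powersetCard, Finset.subset_univ]
  rw [h1, Finset.card_powersetCard, Finset.card_univ, Fintype.card_fin]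

end counting

section transfer
variable (s n : ℕ)

lemma last_not_mem (hs : 1 ≤ s) (hn : 1 ≤ n) (T : Finset (Fin (s*n+1)))
    (hT : T.card = n) (hg : GoodT s n T) :
    (⟨s*n, Nat.lt_succ_self _⟩ : Fin (s*n+1)) ∉ T := by
  intro hmem
  have h1 := hg (s*n) (Nat.lt_succ_self _)
  have h2 : T.filter (fun y : Fin (s*n+1) => (y:ℕ) < s*n)
      = T.erase ⟨s*n, Nat.lt_succ_self _⟩ := by
    ext y
    simp only [Finset.mem_filter, Finset.mem_erase]
    constructor
    · rintro ⟨hy, hlt⟩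
      refine ⟨fun h => ?_, hy⟩
      rw [h] at hlt
      simp at hlt
    · rintro ⟨hne, hy⟩
      have hv : (y:ℕ) ≠ s*n := fun h => hne (Fin.ext h)
      have := y.isLt
      exact ⟨hy, by omega⟩
  unfold cnt at h1
  rw [h2, Finset.card_erase_of_mem hmem, hT] at h1
  obtain ⟨n', rfl⟩ : ∃ n', n = n' + 1 := ⟨n - 1, by omega⟩
  have hmn : s * (n' + 1) = s * n' + s := by ring
  simp only [Nat.add_sub_cancel] at h1
  omega

lemma cnt_transfer (T : Finset (Fin (s*n+1))) (k : ℕ) (hk : k ≤ s*n) :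
    ((Finset.univ.filter (fun x : Fin (s*n) =>
        (⟨(x:ℕ), Nat.lt_succ_of_lt x.isLt⟩ : Fin (s*n+1)) ∈ T)).filter
      (fun x : Fin (s*n) => (x:ℕ) < k)).card
    = cnt T k := by
  unfold cnt
  refine Finset.card_bij
    (fun x _ => (⟨(x:ℕ), Nat.lt_succ_of_lt x.isLt⟩ : Fin (s*n+1))) ?_ ?_ ?_
  · intro x hx
    simp only [Finset.mem_filter, Finset.mem_univ, true_and] at hx ⊢
    exact hx
  · intro x1 _ x2 _ h
    have hv := congrArg (fun z : Fin (s*n+1) => (z:ℕ)) h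
    simp only [Fin.val_mk] at hv
    exact Fin.ext hv
  · intro y hy
    simp only [Finset.mem_filter] at hy
    have hylt : (y:ℕ) < s*n := lt_of_lt_of_le hy.2 hk
    refine ⟨⟨(y:ℕ), hylt⟩, ?_, Fin.ext rfl⟩
    simp only [Finset.mem_filter, Finset.mem_univ, true_and]
    refine ⟨?_, hy.2⟩
    have he : (⟨((⟨(y:ℕ), hylt⟩ : Fin (s*n)) : ℕ),
        Nat.lt_succ_of_lt (⟨(y:ℕ), hylt⟩ : Fin (s*n)).isLt⟩ : Fin (s*n+1)) = y := Fin.ext rfl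
    rw [he]
    exact hy.1

lemma good_ballot (hs : 1 ≤ s) (hn : 1 ≤ n) :
    (Finset.univ.filter (fun T : Finset (Fin (s*n+1)) => T.card = n ∧ GoodT s n T)).card
      = (Finset.univ.filter (fun S : Finset (Fin (s*n)) => BallotSet s n S)).card := by
  classical
  refine Finset.card_bij (fun T _ => Finset.univ.filter (fun x : Fin (s*n) =>
      (⟨(x:ℕ), Nat.lt_succ_of_lt x.isLt⟩ : Fin (s*n+1)) ∈ T)) ?_ ?_ ?_
  · intro T hT
    rw [Finset.mem_filter] at hT
    obtain ⟨-, hTcard, hTgood⟩ := hT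
    rw [Finset.mem_filter]
    refine ⟨Finset.mem_univ _, ?_, ?_⟩
    · have h1 := cnt_transfer s n T (s*n) le_rfl
      have h2 : (Finset.univ.filter (fun x : Fin (s*n) =>
          (⟨(x:ℕ), Nat.lt_succ_of_lt x.isLt⟩ : Fin (s*n+1)) ∈ T)).filter
            (fun x : Fin (s*n) => (x:ℕ) < s*n)
          = Finset.univ.filter (fun x : Fin (s*n) =>
            (⟨(x:ℕ), Nat.lt_succ_of_lt x.isLt⟩ : Fin (s*n+1)) ∈ T) :=
        Finset.filter_eq_self.2 (fun x _ => x.isLt)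
      rw [h2] at h1
      have h3 : T.filter (fun y : Fin (s*n+1) => (y:ℕ) < s*n) = T := by
        refine Finset.filter_eq_self.2 ?_
        intro y hy
        have hyne : y ≠ ⟨s*n, Nat.lt_succ_self _⟩ :=
          fun h => last_not_mem s n hs hn T hTcard hTgood (h ▸ hy)
        have hv : (y:ℕ) ≠ s*n := fun h => hyne (Fin.ext h)
        have := y.isLt
        omega
      unfold cnt at h1
      rw [h3, hTcard] at h1
      exact h1
    · intro k hk
      have h1 := hTgood k (by omega)
      rw [← cnt_transfer s n T k hk] at h1
      exact h1
  · intro T1 h1 T2 h2 heq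
    rw [Finset.mem_filter] at h1 h2
    ext y
    by_cases hy : (y:ℕ) < s*n
    · have hpt := Finset.ext_iff.1 heq ⟨(y:ℕ), hy⟩
      simp only [Finset.mem_filter, Finset.mem_univ, true_and] at hpt
      have hyeq : (⟨((⟨(y:ℕ), hy⟩ : Fin (s*n)) : ℕ),
          Nat.lt_succ_of_lt (⟨(y:ℕ), hy⟩ : Fin (s*n)).isLt⟩ : Fin (s*n+1)) = y := Fin.ext rfl
      rw [hyeq] at hpt
      exact hpt
    · have hyv : (y:ℕ) = s*n := by have := y.isLt; omega
      have hylast : y = ⟨s*n, Nat.lt_succ_self _⟩ := Fin.ext hyv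
      rw [hylast]
      constructor
      · intro hmem
        exact absurd hmem (last_not_mem s n hs hn T1 h1.2.1 h1.2.2)
      · intro hmem
        exact absurd hmem (last_not_mem s n hs hn T2 h2.2.1 h2.2.2)
  · intro S hS
    rw [Finset.mem_filter] at hS
    obtain ⟨-, hScard, hSb⟩ := hS
    set T := S.image (fun x : Fin (s*n) =>
      (⟨(x:ℕ), Nat.lt_succ_of_lt x.isLt⟩ : Fin (s*n+1))) with hTdef
    have hiT : Finset.univ.filter (fun x : Fin (s*n) =>
        (⟨(x:ℕ), Nat.lt_succ_of_lt x.isLt⟩ : Fin (s*n+1)) ∈ T) = S := by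
      ext x
      simp only [Finset.mem_filter, Finset.mem_univ, true_and, hTdef, Finset.mem_image]
      constructor
      · rintro ⟨z, hz, hze⟩
        have hv := congrArg (fun w : Fin (s*n+1) => (w:ℕ)) hze
        simp only [Fin.val_mk] at hv
        rwa [show z = x from Fin.ext hv] at hz
      · intro hx
        exact ⟨x, hx, rfl⟩
    have hTcard : T.card = n := by
      rw [hTdef, Finset.card_image_of_injective, hScard]
      intro a b h
      have hv := congrArg (fun w : Fin (s*n+1) => (w:ℕ)) h
      simp only [Fin.val_mk] at hv
      exact Fin.ext hv
    have hTgood : GoodT s n T := by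
      intro k hk
      have hk' : k ≤ s*n := by omega
      have h1 := cnt_transfer s n T k hk'
      rw [hiT] at h1
      rw [← h1]
      exact hSb k hk'
    refine ⟨T, ?_, hiT⟩
    rw [Finset.mem_filter]
    exact ⟨Finset.mem_univ _, hTcard, hTgood⟩

end transfer

lemma arith_fc (s n : ℕ) (hs : 2 ≤ s) (hn : 1 ≤ n) :
    ((s-1)*n + 1) * Nat.choose (s*n+1) n = (s*n+1) * Nat.choose (s*n) n := by
  obtain ⟨n', rfl⟩ : ∃ n', n = n' + 1 := ⟨n-1, by omega⟩
  have h1 := Nat.add_one_mul_choose_eq (s*(n'+1)) n'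
  have h2 : Nat.choose (s*(n'+1)+1) (n'+1)
      = Nat.choose (s*(n'+1)) n' + Nat.choose (s*(n'+1)) (n'+1) := Nat.choose_succ_succ _ _
  have h3 : (s-1)*(n'+1) + 1 + (n'+1) = s*(n'+1) + 1 := by
    have h4 : (s-1)*(n'+1) + 1*(n'+1) = ((s-1)+1)*(n'+1) := (Nat.add_mul _ _ _).symm
    have h5 : (s-1)+1 = s := by omega
    rw [h5] at h4
    omega
  set A := Nat.choose (s*(n'+1)) n' with hA
  set B := Nat.choose (s*(n'+1)) (n'+1) with hB
  rw [h2] at h1 ⊢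
  -- h1 : (s*(n'+1)+1) * A = (A + B) * (n'+1)
  have key : ((s-1)*(n'+1) + 1) * (A + B) + (n'+1)*(A+B)
      = (s*(n'+1)+1)*B + (n'+1)*(A+B) := by
    have e1 : ((s-1)*(n'+1) + 1) * (A + B) + (n'+1)*(A+B)
        = ((s-1)*(n'+1) + 1 + (n'+1)) * (A+B) := by ring
    rw [e1, h3]
    have e2 : (s*(n'+1)+1) * (A+B) = (s*(n'+1)+1)*A + (s*(n'+1)+1)*B := by ring
    rw [e2, h1]
    ring
  exact Nat.add_right_cancel key


/-- `((s-1)n+1) * |F(s,n)| = C(sn, n)`: the number of partitions of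
`sn` cyclic points into `n` pairwise non-crossing blocks of size `s` (configurations of
`n` non-intersecting `s`-spiders in the disc) equals `(1/((s-1)n+1)) * C(sn, n)`. -/
theorem card_F_eq (s n : ℕ) (hs : 2 ≤ s) (hn : 1 ≤ n) :
    ((s - 1) * n + 1) *
        {P : Finset (Finset (Fin (s * n))) | IsSpiderConfig s n P}.ncard =
      Nat.choose (s * n) n := by
  classical
  have hs1 : 1 ≤ s := by omega
  have hset : {P : Finset (Finset (Fin (s * n))) | IsSpiderConfig s n P}
      = ↑(Finset.univ.filter (fun P : Finset (Finset (Fin (s * n))) => IsSpiderConfig s n P)) := by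
    ext P
    simp
  rw [hset, Set.ncard_coe_finset]
  have hcb : (Finset.univ.filter
        (fun P : Finset (Finset (Fin (s * n))) => IsSpiderConfig s n P)).card
      = (Finset.univ.filter (fun S : Finset (Fin (s*n)) => BallotSet s n S)).card := by
    refine Finset.card_bij (fun P _ => minset P) ?_ ?_ ?_
    · intro P hP
      rw [Finset.mem_filter] at hP ⊢
      exact ⟨Finset.mem_univ _, minset_card hs1 hP.2, minset_ballot hs1 hP.2⟩
    · intro P1 h1 P2 h2 heq
      rw [Finset.mem_filter] at h1 h2
      have hb : BallotSet s n (minset P1) := ⟨minset_card hs1 h1.2, minset_ballot hs1 h1.2⟩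
      obtain ⟨P0, hP0, huniq⟩ := master s hs1 n (minset P1) hb
      have he1 : P1 = P0 := huniq P1 ⟨h1.2, rfl⟩
      have he2 : P2 = P0 := huniq P2 ⟨h2.2, heq.symm⟩
      rw [he1, he2]
    · intro S hS
      rw [Finset.mem_filter] at hS
      obtain ⟨P0, ⟨hP0cfg, hP0min⟩, -⟩ := master s hs1 n S hS.2
      exact ⟨P0, Finset.mem_filter.2 ⟨Finset.mem_univ _, hP0cfg⟩, hP0min⟩
  rw [hcb, ← good_ballot s n hs1 hn]
  have hmain : (Finset.univ.filter
      (fun T : Finset (Fin (s*n+1)) => T.card = n ∧ GoodT s n T)).card * (s*n+1)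
      = Nat.choose (s*n+1) n := by
    rw [← count_eq s n hs1, all_eq_choose]
  have harith := arith_fc s n hs hn
  set g := (Finset.univ.filter
    (fun T : Finset (Fin (s*n+1)) => T.card = n ∧ GoodT s n T)).card with hg
  have h1 : ((s-1)*n + 1) * (g * (s*n+1)) = ((s-1)*n+1) * Nat.choose (s*n+1) n := by
    rw [hmain]
  rw [harith] at h1
  have h2 : (((s-1)*n + 1) * g) * (s*n+1) = (Nat.choose (s*n) n) * (s*n+1) := by
    calc (((s-1)*n + 1) * g) * (s*n+1) = ((s-1)*n + 1) * (g * (s*n+1)) := by ring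
      _ = (s*n+1) * Nat.choose (s*n) n := h1
      _ = Nat.choose (s*n) n * (s*n+1) := by ring
  exact Nat.eq_of_mul_eq_mul_right (Nat.succ_pos _) h2
end

section
/- Let s ≥ 2 and n ≥ 1. The number of elements of A(s,n), i.e. the number of configurations of n non-intersecting s-spiders in an annulus with sn points on its external boundary — equivalently, the number of pairs (P, R) where P is a partition of the sn cyclic boundary points into n pairwise non-crossing blocks of size s and R is one of the (s-1)n+1 regions into which the corresponding spiders dissect the disc (the region containing the inner boundary circle) — equals C(sn, n), the binomial coefficient. -/
set_option linter.unusedSectionVars false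

namespace Spider

open Fin.NatCast Fin.CommRing

variable {m : ℕ} [NeZero m]

/-- position of `x` relative to base point `b`. -/
def pos (b x : Fin m) : ℕ := (x - b).val

lemma m_pos : 0 < m := NeZero.pos m

lemma pos_lt (b x : Fin m) : pos b x < m := (x - b).isLt

lemma pos_inj {b x y : Fin m} (h : pos b x = pos b y) : x = y := by
  have : x - b = y - b := Fin.ext h
  exact sub_left_injective this

lemma base_add_pos (b x : Fin m) : b + ((pos b x : ℕ) : Fin m) = x := by
  rw [pos, Fin.cast_val_eq_self]; ring

lemma sub_val (a b : Fin m) : (a - b).val = (m - b.val + a.val) % m := by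
  rw [Fin.sub_def]

lemma posdiff (b u z : Fin m) : (z - u).val = (m - pos b u + pos b z) % m := by
  have h : z - u = (z - b) - (u - b) := by ring
  rw [h, sub_val]; rfl

lemma posdiff_of_le (b : Fin m) {u z : Fin m} (h : pos b u ≤ pos b z) :
    (z - u).val = pos b z - pos b u := by
  rw [posdiff b u z]
  have h1 := pos_lt b u
  have h2 := pos_lt b z
  have : m - pos b u + pos b z = (pos b z - pos b u) + m := by omega
  rw [this, Nat.add_mod_right, Nat.mod_eq_of_lt (by omega)]

lemma posdiff_of_lt (b : Fin m) {u z : Fin m} (h : pos b z < pos b u) :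
    (z - u).val = pos b z + m - pos b u := by
  rw [posdiff b u z]
  have h1 := pos_lt b u
  have h2 := pos_lt b z
  rw [Nat.mod_eq_of_lt (by omega)]; omega

/-- characterization of cyclic betweenness in terms of positions rel an arbitrary base. -/
lemma cbtw_iff (b : Fin m) (a c a' : Fin m) :
    CBtw a c a' ↔ ((pos b a < pos b c ∧ pos b c < pos b a') ∨
      (pos b a' < pos b a ∧ (pos b a < pos b c ∨ pos b c < pos b a'))) := by
  unfold CBtw
  have := pos_lt b a; have := pos_lt b c; have := pos_lt b a'
  rcases le_or_gt (pos b a) (pos b c) with h1 | h1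
  · rw [posdiff_of_le b h1]
    rcases le_or_gt (pos b a) (pos b a') with h2 | h2
    · rw [posdiff_of_le b h2]; omega
    · rw [posdiff_of_lt b h2]; omega
  · rw [posdiff_of_lt b h1]
    rcases le_or_gt (pos b a) (pos b a') with h2 | h2
    · rw [posdiff_of_le b h2]; omega
    · rw [posdiff_of_lt b h2]; omega

/-- linear alternation (rel any base) implies cyclic crossing. -/
lemma crossSets_of_pos (b : Fin m) {A B : Finset (Fin m)}
    {a c a' c' : Fin m} (ha : a ∈ A) (ha' : a' ∈ A) (hc : c ∈ B) (hc' : c' ∈ B)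
    (h1 : pos b a < pos b c) (h2 : pos b c < pos b a') (h3 : pos b a' < pos b c') :
    CrossSets A B := by
  refine ⟨a, ha, a', ha', c, hc, c', hc', ?_, ?_⟩
  · rw [cbtw_iff b]; left; exact ⟨h1, h2⟩
  · rw [cbtw_iff b]; right; exact ⟨by omega, Or.inl h3⟩

/-- cyclic crossing yields a linear alternation rel any base. -/
lemma exists_pos_of_crossSets (b : Fin m) {A B : Finset (Fin m)}
    (h : CrossSets A B) :
    ∃ x1 x2 x3 x4 : Fin m,
      pos b x1 < pos b x2 ∧ pos b x2 < pos b x3 ∧ pos b x3 < pos b x4 ∧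
      ((x1 ∈ A ∧ x2 ∈ B ∧ x3 ∈ A ∧ x4 ∈ B) ∨ (x1 ∈ B ∧ x2 ∈ A ∧ x3 ∈ B ∧ x4 ∈ A)) := by
  obtain ⟨a, ha, a', ha', c, hc, c', hc', h1, h2⟩ := h
  rw [cbtw_iff b] at h1 h2
  rcases h1 with ⟨u1, u2⟩ | ⟨u1, u2⟩
  · rcases h2 with ⟨v1, v2⟩ | ⟨v1, v2⟩
    · exact ⟨a, c, a', c', by omega, by omega, by omega, Or.inl ⟨ha, hc, ha', hc'⟩⟩
    · rcases v2 with v2 | v2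
      · exact ⟨a, c, a', c', by omega, by omega, by omega, Or.inl ⟨ha, hc, ha', hc'⟩⟩
      · exact ⟨c', a, c, a', by omega, by omega, by omega, Or.inr ⟨hc', ha, hc, ha'⟩⟩
  · rcases h2 with ⟨v1, v2⟩ | ⟨v1, v2⟩
    · rcases u2 with u2 | u2
      · exact ⟨a', c', a, c, by omega, by omega, by omega, Or.inl ⟨ha', hc', ha, hc⟩⟩
      · exact ⟨c, a', c', a, by omega, by omega, by omega, Or.inr ⟨hc, ha', hc', ha⟩⟩
    · omega

lemma pos_self (b : Fin m) : pos b b = 0 := by simp [pos]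

lemma pos_add_nat (b : Fin m) {j : ℕ} (hj : j < m) : pos b (b + (j : Fin m)) = j := by
  simp [pos, Fin.val_natCast, Nat.mod_eq_of_lt hj]


def wt (s : ℕ) (T : Finset (Fin m)) (x : Fin m) : ℤ :=
  if x ∈ T then (s : ℤ) - 1 else -1

def sig (s : ℕ) (T : Finset (Fin m)) (b : Fin m) (j : ℕ) : ℤ :=
  ∑ i ∈ Finset.range j, wt s T (b + (i : Fin m))

lemma sig_zero (s : ℕ) (T : Finset (Fin m)) (b : Fin m) : sig s T b 0 = 0 := rfl

lemma sig_succ (s : ℕ) (T : Finset (Fin m)) (b : Fin m) (j : ℕ) :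
    sig s T b (j + 1) = sig s T b j + wt s T (b + (j : Fin m)) :=
  Finset.sum_range_succ _ _

/-- the window of points with positions in `[j,k)`. -/
def win (b : Fin m) (j k : ℕ) : Finset (Fin m) :=
  Finset.univ.filter (fun z => j ≤ pos b z ∧ pos b z < k)

lemma mem_win {b : Fin m} {j k : ℕ} {z : Fin m} :
    z ∈ win b j k ↔ j ≤ pos b z ∧ pos b z < k := by simp [win]

/-- sum over a window `[j,k)` of positions, `k ≤ m`, as a sum over the points there. -/
lemma sig_window (s : ℕ) (T : Finset (Fin m)) (b : Fin m) {j k : ℕ} (hjk : j ≤ k) (hk : k ≤ m) :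
    sig s T b k - sig s T b j = ∑ z ∈ win b j k, wt s T z := by
  have h1 : sig s T b k = sig s T b j + ∑ i ∈ Finset.Ico j k, wt s T (b + (i : Fin m)) := by
    rw [sig, sig, Finset.range_eq_Ico,
      ← Finset.sum_Ico_consecutive _ (Nat.zero_le j) hjk, Finset.range_eq_Ico]
  rw [h1]
  have h2 : ∑ i ∈ Finset.Ico j k, wt s T (b + (i : Fin m)) = ∑ z ∈ win b j k, wt s T z := by
    refine Finset.sum_nbij' (fun i => b + (i : Fin m)) (fun z => pos b z) ?_ ?_ ?_ ?_ ?_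
    · intro i hi
      simp only [Finset.mem_Ico] at hi
      rw [mem_win, pos_add_nat b (lt_of_lt_of_le hi.2 hk)]
      exact hi
    · intro z hz
      rw [mem_win] at hz
      simp only [Finset.mem_Ico]
      exact hz
    · intro i hi
      simp only [Finset.mem_Ico] at hi
      exact pos_add_nat b (lt_of_lt_of_le hi.2 hk)
    · intro z hz
      exact base_add_pos b z
    · intro i hi; rfl
  rw [h2]; ring

lemma sig_as_card (s : ℕ) (T : Finset (Fin m)) (b : Fin m) {j k : ℕ} (hjk : j ≤ k) (hk : k ≤ m) :
    sig s T b k - sig s T b j =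
      ((s : ℤ) - 1) * ((win b j k).filter (fun z => z ∈ T)).card -
        ((win b j k).filter (fun z => z ∉ T)).card := by
  rw [sig_window s T b hjk hk]
  rw [← Finset.sum_filter_add_sum_filter_not (win b j k) (fun z => z ∈ T) (wt s T)]
  have e1 : ∀ z ∈ (win b j k).filter (fun z => z ∈ T), wt s T z = (s : ℤ) - 1 := by
    intro z hz; simp only [Finset.mem_filter] at hz; simp [wt, hz.2]
  have e2 : ∀ z ∈ (win b j k).filter (fun z => z ∉ T), wt s T z = -1 := by
    intro z hz; simp only [Finset.mem_filter] at hz; simp [wt, hz.2]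
  rw [Finset.sum_congr rfl e1, Finset.sum_congr rfl e2, Finset.sum_const, Finset.sum_const]
  push_cast; ring

lemma win_zero_m (b : Fin m) : win b 0 m = Finset.univ := by
  ext z; simp [mem_win, pos_lt]

/-- total balance. -/
lemma sig_m {s n : ℕ} {T : Finset (Fin m)} (b : Fin m) (hm : m = s * n) (hT : T.card = n) :
    sig s T b m = 0 := by
  have h := sig_as_card s T b (Nat.zero_le m) (le_refl m)
  rw [win_zero_m, sig_zero, sub_zero] at h
  have h1 : Finset.univ.filter (fun z : Fin m => z ∈ T) = T := by ext z; simp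
  have h2 : (Finset.univ.filter (fun z : Fin m => z ∉ T)).card = m - n := by
    have h3 := Finset.card_filter_add_card_filter_not
      (s := (Finset.univ : Finset (Fin m))) (p := fun z => z ∈ T)
    rw [h1] at h3
    simp only [Finset.card_univ, Fintype.card_fin] at h3
    omega
  rw [h1, h2, hT] at h
  have hn : n ≤ m := by
    have h0 : 0 < m := m_pos
    rcases Nat.eq_zero_or_pos s with rfl | hs
    · simp at hm; omega
    · calc n ≤ s * n := Nat.le_mul_of_pos_left n hs
        _ = m := hm.symm
  have : ((m : ℤ) - n) = (s : ℤ) * n - n := by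
    have : (m : ℤ) = (s : ℤ) * n := by exact_mod_cast congrArg (Nat.cast : ℕ → ℤ) hm
    rw [this]
  rw [h]
  push_cast
  rw [Nat.cast_sub hn] at *
  have hms : (m : ℤ) = (s : ℤ) * n := by exact_mod_cast congrArg (Nat.cast : ℕ → ℤ) hm
  rw [hms]; ring

/-- rotation formula. -/
lemma sig_rot (s : ℕ) (T : Finset (Fin m)) (b : Fin m) (q i : ℕ) :
    sig s T (b + (q : Fin m)) i = sig s T b (q + i) - sig s T b q := by
  have h1 : sig s T b (q + i) = sig s T b q + ∑ t ∈ Finset.range i, wt s T (b + ((q + t : ℕ) : Fin m)) := by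
    induction i with
    | zero => simp
    | succ k ih =>
      rw [← Nat.add_assoc, sig_succ, ih, Finset.sum_range_succ]
      ring
  rw [h1, sig]
  have h2 : ∀ t : ℕ, b + (q : Fin m) + (t : Fin m) = b + ((q + t : ℕ) : Fin m) := by
    intro t; push_cast; ring
  rw [Finset.sum_congr rfl (fun t _ => by rw [h2 t])]
  ring

/-- periodicity. -/
lemma sig_add_m {s n : ℕ} {T : Finset (Fin m)} (b : Fin m) (hm : m = s * n) (hT : T.card = n)
    (j : ℕ) : sig s T b (j + m) = sig s T b j := by
  have h := sig_rot s T b j m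
  rw [sig_m (b + (j : Fin m)) hm hT] at h
  omega

lemma sig_mod {s n : ℕ} {T : Finset (Fin m)} (b : Fin m) (hm : m = s * n) (hT : T.card = n)
    (j : ℕ) : sig s T b j = sig s T b (j % m) := by
  induction j using Nat.strong_induction_on with
  | _ j ih =>
    rcases lt_or_ge j m with h | h
    · rw [Nat.mod_eq_of_lt h]
    · have h0 : 0 < m := m_pos
      have h2 : j % m = (j - m) % m := Nat.mod_eq_sub_mod h
      calc sig s T b j = sig s T b ((j - m) + m) := by rw [Nat.sub_add_cancel h]
        _ = sig s T b (j - m) := sig_add_m b hm hT (j - m)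
        _ = sig s T b ((j - m) % m) := ih (j - m) (by omega)
        _ = sig s T b (j % m) := by rw [h2]

def Good (s : ℕ) (T : Finset (Fin m)) (b : Fin m) : Prop := ∀ j : ℕ, 0 ≤ sig s T b j

lemma exists_good {s n : ℕ} {T : Finset (Fin m)} (hm : m = s * n) (hT : T.card = n) :
    ∃ b : Fin m, Good s T b := by
  have h0 : 0 < m := m_pos
  obtain ⟨q, hq, hmin⟩ := Finset.exists_min_image (Finset.range m) (sig s T 0) ⟨0, by simp [h0]⟩
  refine ⟨(0 : Fin m) + (q : Fin m), ?_⟩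
  intro j
  rw [sig_rot]
  have h1 : sig s T 0 (q + j) = sig s T 0 ((q + j) % m) := sig_mod 0 hm hT (q + j)
  rw [h1]
  have h2 := hmin ((q + j) % m) (by simp [Nat.mod_lt _ h0])
  omega

/-- the matching leader position for a non-leader point. -/
def jstar (s : ℕ) (T : Finset (Fin m)) (b : Fin m) (p : ℕ) : ℕ :=
  Nat.findGreatest (fun j => sig s T b j ≤ sig s T b (p + 1)) p

/-- the matched leader of a non-leader point. -/
def mtch (s : ℕ) (T : Finset (Fin m)) (b : Fin m) (y : Fin m) : Fin m :=
  b + ((jstar s T b (pos b y) : ℕ) : Fin m)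

def blockOf (s : ℕ) (T : Finset (Fin m)) (b : Fin m) (x : Fin m) : Finset (Fin m) :=
  insert x (Finset.univ.filter (fun y => y ∉ T ∧ mtch s T b y = x))

def construct (s : ℕ) (T : Finset (Fin m)) (b : Fin m) : Finset (Finset (Fin m)) :=
  T.image (blockOf s T b)

/-- the leader (first element anticlockwise from `b`) of a nonempty finset. -/
def leadB (b : Fin m) (B : Finset (Fin m)) : Fin m :=
  if h : B.Nonempty then b + (((B.image (pos b)).min' (h.image _) : ℕ) : Fin m) else b

lemma leadB_spec {b : Fin m} {B : Finset (Fin m)} (h : B.Nonempty) :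
    leadB b B ∈ B ∧ ∀ e ∈ B, pos b (leadB b B) ≤ pos b e := by
  rw [leadB, dif_pos h]
  obtain ⟨x, hx, hxe⟩ := Finset.mem_image.1 ((B.image (pos b)).min'_mem (h.image _))
  rw [← hxe, base_add_pos]
  refine ⟨hx, fun e he => ?_⟩
  rw [hxe]
  exact Finset.min'_le _ _ (Finset.mem_image_of_mem _ he)

lemma leadB_mem {b : Fin m} {B : Finset (Fin m)} (h : B.Nonempty) : leadB b B ∈ B :=
  (leadB_spec h).1

lemma leadB_le {b : Fin m} {B : Finset (Fin m)} (h : B.Nonempty) {e : Fin m} (he : e ∈ B) :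
    pos b (leadB b B) ≤ pos b e := (leadB_spec h).2 e he

lemma leadB_eq_of {b x : Fin m} {B : Finset (Fin m)} (hx : x ∈ B)
    (hmin : ∀ e ∈ B, e ≠ x → pos b x < pos b e) : leadB b B = x := by
  have h : B.Nonempty := ⟨x, hx⟩
  by_contra hne
  have h1 := leadB_le (b := b) h hx
  have h2 := hmin _ (leadB_mem h) hne
  omega

def Leaders (b : Fin m) (P : Finset (Finset (Fin m))) : Finset (Fin m) :=
  P.image (leadB b)

/-- facts about the matching. -/
lemma mtch_facts {s : ℕ} {T : Finset (Fin m)} {b : Fin m} (hg : Good s T b)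
    {y : Fin m} (hy : y ∉ T) :
    mtch s T b y ∈ T ∧ pos b (mtch s T b y) < pos b y ∧
      sig s T b (pos b (mtch s T b y)) ≤ sig s T b (pos b y + 1) ∧
      sig s T b (pos b y + 1) < sig s T b (pos b (mtch s T b y)) + ((s:ℤ) - 1) ∧
      (∀ j : ℕ, pos b (mtch s T b y) < j → j ≤ pos b y → sig s T b (pos b y + 1) < sig s T b j) := by
  have hp_lt : pos b y < m := pos_lt b y
  have h0 : sig s T b 0 ≤ sig s T b (pos b y + 1) := by rw [sig_zero]; exact hg _
  have hspec : sig s T b (jstar s T b (pos b y)) ≤ sig s T b (pos b y + 1) :=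
    Nat.findGreatest_spec (P := fun j => sig s T b j ≤ sig s T b (pos b y + 1))
      (Nat.zero_le (pos b y)) h0
  have hjle : jstar s T b (pos b y) ≤ pos b y := Nat.findGreatest_le (pos b y)
  have hgr : ∀ j : ℕ, jstar s T b (pos b y) < j → j ≤ pos b y →
      sig s T b (pos b y + 1) < sig s T b j := by
    intro j h1 h2
    have := Nat.findGreatest_is_greatest
      (P := fun j => sig s T b j ≤ sig s T b (pos b y + 1)) h1 h2
    omega
  have hwty : wt s T y = -1 := by rw [wt, if_neg hy]
  have hsigp : sig s T b (pos b y) = sig s T b (pos b y + 1) + 1 := by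
    have h := sig_succ s T b (pos b y)
    rw [base_add_pos, hwty] at h
    omega
  have hjlt : jstar s T b (pos b y) < pos b y := by
    rcases Nat.lt_or_ge (jstar s T b (pos b y)) (pos b y) with h | h
    · exact h
    · exfalso
      have he : jstar s T b (pos b y) = pos b y := by omega
      rw [he] at hspec
      omega
  have hposm : pos b (mtch s T b y) = jstar s T b (pos b y) := by
    rw [mtch, pos_add_nat b (by omega)]
  have hstep : sig s T b (pos b y + 1) < sig s T b (jstar s T b (pos b y) + 1) :=
    hgr _ (Nat.lt_succ_self _) (by omega)
  have hwt_pos : (0:ℤ) < wt s T (b + ((jstar s T b (pos b y) : ℕ) : Fin m)) := by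
    have := sig_succ s T b (jstar s T b (pos b y))
    omega
  have hmem : mtch s T b y ∈ T := by
    by_contra hne
    rw [mtch] at hne
    rw [wt, if_neg hne] at hwt_pos
    omega
  refine ⟨hmem, by omega, by rw [hposm]; exact hspec, ?_, ?_⟩
  · rw [hposm]
    have hwt_le : wt s T (b + ((jstar s T b (pos b y) : ℕ) : Fin m)) = (s:ℤ) - 1 := by
      rw [wt, if_pos]
      rw [mtch] at hmem
      exact hmem
    have := sig_succ s T b (jstar s T b (pos b y))
    omega
  · intro j h1 h2
    rw [hposm] at h1
    exact hgr j h1 h2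

section Construct

variable {s n : ℕ} {T : Finset (Fin m)} {b : Fin m}

lemma mem_blockOf {x e : Fin m} :
    e ∈ blockOf s T b x ↔ e = x ∨ (e ∉ T ∧ mtch s T b e = x) := by
  simp [blockOf]

/-- facts about elements of a constructed block. -/
lemma block_elem (hg : Good s T b) {x e : Fin m} (hx : x ∈ T)
    (he : e ∈ blockOf s T b x) (hne : e ≠ x) :
    e ∉ T ∧ pos b x < pos b e ∧
      sig s T b (pos b x) ≤ sig s T b (pos b e + 1) ∧
      (∀ j : ℕ, pos b x < j → j ≤ pos b e → sig s T b (pos b e + 1) < sig s T b j) := by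
  rcases mem_blockOf.1 he with h | ⟨h1, h2⟩
  · exact absurd h hne
  · obtain ⟨_, hlt, hle, _, hwin⟩ := mtch_facts hg h1
    rw [h2] at hlt hle hwin
    exact ⟨h1, hlt, hle, hwin⟩

lemma pos_le_of_mem_blockOf (hg : Good s T b) {x e : Fin m} (hx : x ∈ T)
    (he : e ∈ blockOf s T b x) : pos b x ≤ pos b e := by
  by_cases h : e = x
  · rw [h]
  · exact le_of_lt (block_elem hg hx he h).2.1

lemma blockOf_disj (hg : Good s T b) {x x' : Fin m} (hx : x ∈ T) (hx' : x' ∈ T)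
    (hne : x ≠ x') : Disjoint (blockOf s T b x) (blockOf s T b x') := by
  rw [Finset.disjoint_left]
  intro e he he'
  rcases mem_blockOf.1 he with h | ⟨h1, h2⟩
  · rcases mem_blockOf.1 he' with h' | ⟨h1', h2'⟩
    · exact hne (h ▸ h')
    · exact h1' (h ▸ hx)
  · rcases mem_blockOf.1 he' with h' | ⟨h1', h2'⟩
    · exact h1 (h' ▸ hx')
    · exact hne (h2 ▸ h2' ▸ rfl)

lemma self_mem_blockOf (x : Fin m) : x ∈ blockOf s T b x := by simp [mem_blockOf]

lemma blockOf_cover (hg : Good s T b) (y : Fin m) :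
    ∃ x ∈ T, y ∈ blockOf s T b x := by
  by_cases hy : y ∈ T
  · exact ⟨y, hy, self_mem_blockOf y⟩
  · exact ⟨mtch s T b y, (mtch_facts hg hy).1, mem_blockOf.2 (Or.inr ⟨hy, rfl⟩)⟩

lemma leadB_blockOf (hg : Good s T b) {x : Fin m} (hx : x ∈ T) :
    leadB b (blockOf s T b x) = x := by
  apply leadB_eq_of (self_mem_blockOf x)
  intro e he hne
  exact (block_elem hg hx he hne).2.1

lemma blockOf_injOn (hg : Good s T b) {x x' : Fin m} (hx : x ∈ T) (hx' : x' ∈ T)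
    (h : blockOf s T b x = blockOf s T b x') : x = x' := by
  rw [← leadB_blockOf hg hx, ← leadB_blockOf hg hx', h]

def fib (s : ℕ) (T : Finset (Fin m)) (b : Fin m) (x : Fin m) : Finset (Fin m) :=
  Finset.univ.filter (fun y => y ∉ T ∧ mtch s T b y = x)

lemma blockOf_eq_insert (x : Fin m) : blockOf s T b x = insert x (fib s T b x) := rfl

lemma card_fib_le (hs : 2 ≤ s) (hg : Good s T b) (x : Fin m) :
    (fib s T b x).card ≤ s - 1 := by
  have hinj : ∀ y ∈ fib s T b x, ∀ y' ∈ fib s T b x,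
      (sig s T b (pos b y + 1) - sig s T b (pos b x)).toNat =
        (sig s T b (pos b y' + 1) - sig s T b (pos b x)).toNat → y = y' := by
    intro y hy y' hy' heq
    simp only [fib, Finset.mem_filter] at hy hy'
    obtain ⟨-, hyT, hym⟩ := hy
    obtain ⟨-, hyT', hym'⟩ := hy'
    obtain ⟨-, hlt, hle, -, hwin⟩ := mtch_facts hg hyT
    obtain ⟨-, hlt', hle', -, hwin'⟩ := mtch_facts hg hyT'
    rw [hym] at hlt hle hwin
    rw [hym'] at hlt' hle' hwin'
    have hv : sig s T b (pos b y + 1) = sig s T b (pos b y' + 1) := by omega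
    by_contra hne
    have hposne : pos b y ≠ pos b y' := fun hc => hne (pos_inj hc)
    rcases Nat.lt_or_ge (pos b y) (pos b y') with h | h
    · have := hwin' (pos b y + 1) (by omega) (by omega)
      omega
    · have := hwin (pos b y' + 1) (by omega) (by omega)
      omega
  have hmap : ∀ y ∈ fib s T b x,
      (sig s T b (pos b y + 1) - sig s T b (pos b x)).toNat ∈ Finset.range (s - 1) := by
    intro y hy
    simp only [fib, Finset.mem_filter] at hy
    obtain ⟨-, hyT, hym⟩ := hy
    obtain ⟨-, -, hle, hub, -⟩ := mtch_facts hg hyT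
    rw [hym] at hle hub
    simp only [Finset.mem_range]
    have : (s : ℤ) - 1 = ((s - 1 : ℕ) : ℤ) := by
      have : (1:ℤ) ≤ (s:ℤ) := by exact_mod_cast Nat.one_le_of_lt hs
      push_cast [Nat.cast_sub (by omega : 1 ≤ s)]
      ring
    omega
  calc (fib s T b x).card ≤ (Finset.range (s - 1)).card :=
        Finset.card_le_card_of_injOn _ hmap hinj
    _ = s - 1 := Finset.card_range _

lemma card_fib (hs : 2 ≤ s) (hm : m = s * n) (hT : T.card = n) (hg : Good s T b)
    {x : Fin m} (hx : x ∈ T) : (fib s T b x).card = s - 1 := by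
  have hN : Finset.univ.filter (fun y : Fin m => y ∉ T) = T.biUnion (fib s T b) := by
    ext y
    simp only [Finset.mem_filter, Finset.mem_univ, true_and, Finset.mem_biUnion]
    constructor
    · intro hy
      exact ⟨mtch s T b y, (mtch_facts hg hy).1, by simp [fib, hy]⟩
    · rintro ⟨x', -, hy⟩
      simp only [fib, Finset.mem_filter] at hy
      exact hy.2.1
  have hcardN : (Finset.univ.filter (fun y : Fin m => y ∉ T)).card = m - n := by
    have h1 : Finset.univ.filter (fun z : Fin m => z ∈ T) = T := by ext z; simp
    have h3 := Finset.card_filter_add_card_filter_not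
      (s := (Finset.univ : Finset (Fin m))) (p := fun z => z ∈ T)
    rw [h1] at h3
    simp only [Finset.card_univ, Fintype.card_fin] at h3
    omega
  have hdisj : ∀ x1 ∈ T, ∀ x2 ∈ T, x1 ≠ x2 → Disjoint (fib s T b x1) (fib s T b x2) := by
    intro x1 h1 x2 h2 hne
    rw [Finset.disjoint_left]
    intro e he1 he2
    simp only [fib, Finset.mem_filter] at he1 he2
    exact hne (he1.2.2 ▸ he2.2.2 ▸ rfl)
  have hsum : ∑ x' ∈ T, (fib s T b x').card = m - n := by
    rw [← Finset.card_biUnion hdisj, ← hN, hcardN]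
  have htot : m - n = (s - 1) * n := by
    rw [hm, Nat.sub_mul, one_mul]
  by_contra hne
  have hlt : (fib s T b x).card < s - 1 :=
    lt_of_le_of_ne (card_fib_le hs hg x) hne
  have : ∑ x' ∈ T, (fib s T b x').card < ∑ x' ∈ T, (s - 1) := by
    apply Finset.sum_lt_sum (fun i hi => card_fib_le hs hg i) ⟨x, hx, hlt⟩
  rw [Finset.sum_const, smul_eq_mul, hsum, htot, hT, mul_comm (s-1) n] at this
  exact lt_irrefl _ this

lemma card_blockOf (hs : 2 ≤ s) (hm : m = s * n) (hT : T.card = n) (hg : Good s T b)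
    {x : Fin m} (hx : x ∈ T) : (blockOf s T b x).card = s := by
  rw [blockOf_eq_insert, Finset.card_insert_of_notMem (by simp [fib, hx]),
    card_fib hs hm hT hg hx]
  omega

lemma card_construct (hg : Good s T b) (hT : T.card = n) :
    (construct s T b).card = n := by
  rw [construct, Finset.card_image_of_injOn (fun x hx y hy h => blockOf_injOn hg hx hy h), hT]

end Construct

section NonCross

variable {s n : ℕ} {T : Finset (Fin m)} {b : Fin m}

/-- no linear alternation between two distinct constructed blocks. -/
lemma no_alt (hg : Good s T b) {x0 y0 : Fin m} (hx0 : x0 ∈ T) (hy0 : y0 ∈ T)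
    (hne : x0 ≠ y0) {e1 e2 e3 e4 : Fin m}
    (h1 : e1 ∈ blockOf s T b x0) (h2 : e2 ∈ blockOf s T b y0)
    (h3 : e3 ∈ blockOf s T b x0) (h4 : e4 ∈ blockOf s T b y0)
    (o1 : pos b e1 < pos b e2) (o2 : pos b e2 < pos b e3) (o3 : pos b e3 < pos b e4) :
    False := by
  have hx1 : pos b x0 ≤ pos b e1 := pos_le_of_mem_blockOf hg hx0 h1
  have hy2 : pos b y0 ≤ pos b e2 := pos_le_of_mem_blockOf hg hy0 h2
  have hposne : pos b x0 ≠ pos b y0 := fun hc => hne (pos_inj hc)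
  rcases Nat.lt_or_ge (pos b x0) (pos b y0) with hc | hc
  · -- x0 before y0 : use e3 (in block x0) and e4 (in block y0)
    have he3 : e3 ≠ x0 := by
      intro h; rw [h] at o2; omega
    have he4 : e4 ≠ y0 := by
      intro h; rw [h] at o3; omega
    obtain ⟨-, hlt3, hle3, hwin3⟩ := block_elem hg hx0 h3 he3
    obtain ⟨-, hlt4, hle4, hwin4⟩ := block_elem hg hy0 h4 he4
    have ha := hwin3 (pos b y0) (by omega) (by omega)
    have hb := hwin4 (pos b e3 + 1) (by omega) (by omega)
    omega
  · -- y0 before x0 : use e2 (in block y0) and e3 (in block x0)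
    have he2 : e2 ≠ y0 := by
      intro h; rw [h] at o1; omega
    have he3 : e3 ≠ x0 := by
      intro h; rw [h] at o2; omega
    obtain ⟨-, hlt2, hle2, hwin2⟩ := block_elem hg hy0 h2 he2
    obtain ⟨-, hlt3, hle3, hwin3⟩ := block_elem hg hx0 h3 he3
    have ha := hwin2 (pos b x0) (by omega) (by omega)
    have hb := hwin3 (pos b e2 + 1) (by omega) (by omega)
    omega

lemma noncross_construct (hg : Good s T b) {x0 y0 : Fin m} (hx0 : x0 ∈ T) (hy0 : y0 ∈ T)
    (hne : blockOf s T b x0 ≠ blockOf s T b y0) :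
    ¬ CrossSets (blockOf s T b x0) (blockOf s T b y0) := by
  intro hcross
  have hxy : x0 ≠ y0 := fun h => hne (h ▸ rfl)
  obtain ⟨z1, z2, z3, z4, o1, o2, o3, hmem⟩ := exists_pos_of_crossSets b hcross
  rcases hmem with ⟨m1, m2, m3, m4⟩ | ⟨m1, m2, m3, m4⟩
  · exact no_alt hg hx0 hy0 hxy m1 m2 m3 m4 o1 o2 o3
  · exact no_alt hg hy0 hx0 hxy.symm m1 m2 m3 m4 o1 o2 o3

end NonCross

section Arcs

lemma arcIn_def (x a y : Fin m) : ArcIn x a y ↔ pos x a < pos x y := Iff.rfl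

lemma arcIn_not_both {x y c : Fin m} (h1 : ArcIn x c y) (h2 : ArcIn y c x) : False := by
  rw [arcIn_def] at h1
  have hxy : 0 < pos x y := lt_of_le_of_lt (Nat.zero_le _) h1
  have hyx : pos x x = 0 := pos_self x
  rw [ArcIn] at h2
  rw [posdiff_of_lt x (u := y) (z := x) (by omega)] at h2
  rw [posdiff_of_lt x (u := y) (z := c) h1] at h2
  omega

lemma arcIn_or {x y : Fin m} (c : Fin m) (hne : x ≠ y) : ArcIn x c y ∨ ArcIn y c x := by
  have hxy : 0 < pos x y := by
    rcases Nat.eq_zero_or_pos (pos x y) with h | h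
    · exact absurd (pos_inj (h.trans (pos_self x).symm)) (Ne.symm hne)
    · exact h
  rcases Nat.lt_or_ge (pos x c) (pos x y) with h | h
  · exact Or.inl ((arcIn_def x c y).2 h)
  · right
    rw [ArcIn]
    rw [posdiff_of_lt x (u := y) (z := x) (by rw [pos_self]; omega)]
    rw [posdiff_of_le x (u := y) (z := c) h]
    have := pos_lt x c
    have := pos_lt x y
    rw [pos_self]
    omega

lemma sep_symm {B : Finset (Fin m)} {a c : Fin m} (h : Separates B a c) : Separates B c a := by
  obtain ⟨x, hx, y, hy, h1, h2⟩ := h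
  exact ⟨y, hy, x, hx, h2, h1⟩

lemma sep_cases {B : Finset (Fin m)} {a c a0 : Fin m} (h : Separates B a c) :
    Separates B a a0 ∨ Separates B a0 c := by
  obtain ⟨x, hx, y, hy, h1, h2⟩ := h
  have hxy : x ≠ y := by
    intro he
    rw [he] at h1
    rw [arcIn_def, pos_self] at h1
    omega
  rcases arcIn_or a0 hxy with h3 | h3
  · exact Or.inr ⟨x, hx, y, hy, h3, h2⟩
  · exact Or.inl ⟨x, hx, y, hy, h1, h3⟩

lemma sameFace_refl (C : Finset (Finset (Fin m))) (a : Fin m) : SameFace C a a := by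
  intro B hB hsep
  obtain ⟨x, hx, y, hy, h1, h2⟩ := hsep
  exact arcIn_not_both h1 h2

lemma sameFace_symm {C : Finset (Finset (Fin m))} {a c : Fin m} (h : SameFace C a c) :
    SameFace C c a := fun B hB hsep => h B hB (sep_symm hsep)

lemma sameFace_trans {C : Finset (Finset (Fin m))} {a0 a c : Fin m}
    (h1 : SameFace C a0 a) (h2 : SameFace C a0 c) : SameFace C a c := by
  intro B hB hsep
  rcases sep_cases (a0 := a0) hsep with h | h
  · exact h1 B hB (sep_symm h)
  · exact h2 B hB h

lemma face_eq {C : Finset (Finset (Fin m))} {R : Set (Fin m)} (hR : R ∈ Faces C)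
    {a : Fin m} (ha : a ∈ R) : R = {c | SameFace C a c} := by
  obtain ⟨a0, rfl⟩ := hR
  have h0 : SameFace C a0 a := ha
  ext c
  simp only [Set.mem_setOf_eq]
  exact ⟨fun h => sameFace_trans h0 h, fun h => sameFace_trans (sameFace_symm h0) h⟩

/-- position of the arc `b - 1` : `ArcIn u (b-1) w ↔ pos b w < pos b u`. -/
lemma arcIn_base {b u w : Fin m} : ArcIn u (b - 1) w ↔ pos b w < pos b u := by
  have hb1 : pos b (b - 1) = m - 1 := by
    rw [pos]
    have h : b - 1 - b = 0 - 1 := by ring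
    rw [h, sub_val]
    simp only [Fin.val_zero, Fin.val_one']
    have hm1 : 0 < m := m_pos
    rcases Nat.eq_or_lt_of_le hm1 with h1 | h1
    · simp [← h1]
    · have : (1 : ℕ) % m = 1 := Nat.mod_eq_of_lt h1
      rw [this]
      rw [Nat.mod_eq_of_lt (by omega)]
      omega
  rw [ArcIn]
  have hu := pos_lt b u
  have hw := pos_lt b w
  have h1 : ((b - 1) - u).val = m - 1 - pos b u := by
    rw [posdiff_of_le b (u := u) (z := b - 1) (by omega)]
    omega
  rw [h1]
  rcases Nat.lt_or_ge (pos b w) (pos b u) with h | h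
  · rw [posdiff_of_lt b h]
    omega
  · rw [posdiff_of_le b h]
    omega

lemma arcIn_mid {b w u c : Fin m} (h : pos b w < pos b u) :
    ArcIn w c u ↔ pos b w ≤ pos b c ∧ pos b c < pos b u := by
  rw [ArcIn]
  have hc := pos_lt b c
  have hu := pos_lt b u
  rw [posdiff_of_le b (u := w) (z := u) (by omega)]
  rcases Nat.lt_or_ge (pos b c) (pos b w) with h2 | h2
  · rw [posdiff_of_lt b h2]
    omega
  · rw [posdiff_of_le b h2]
    omega

lemma sep_base_iff {B : Finset (Fin m)} {b c : Fin m} :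
    Separates B (b - 1) c ↔ ∃ u ∈ B, ∃ w ∈ B, pos b w ≤ pos b c ∧ pos b c < pos b u := by
  constructor
  · rintro ⟨u, hu, w, hw, h1, h2⟩
    rw [arcIn_base] at h1
    rw [arcIn_mid h1] at h2
    exact ⟨u, hu, w, hw, h2⟩
  · rintro ⟨u, hu, w, hw, h1, h2⟩
    refine ⟨u, hu, w, hw, ?_, ?_⟩
    · rw [arcIn_base]; omega
    · rw [arcIn_mid (b := b) (by omega)]; exact ⟨h1, h2⟩

end Arcs

section Faces

variable {s n : ℕ} {T : Finset (Fin m)} {b : Fin m}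

/-- L1: the face of the base arc `b-1` in the constructed configuration consists of
the arcs at level `0`. -/
lemma sameFace_construct_iff (hs : 2 ≤ s) (hm : m = s * n) (hT : T.card = n)
    (hg : Good s T b) (c : Fin m) :
    SameFace (construct s T b) (b - 1) c ↔ sig s T b (pos b c + 1) = 0 := by
  constructor
  · -- if same face then level 0
    intro hsf
    by_contra hne
    have hpos : 1 ≤ sig s T b (pos b c + 1) := by
      have := hg (pos b c + 1)
      omega
    have hjm : pos b c + 1 < m := by
      rcases Nat.lt_or_ge (pos b c + 1) m with h | h
      · exact h
      · exfalso
        have h1 : pos b c + 1 = m := by have := pos_lt b c; omega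
        rw [h1, sig_m b hm hT] at hpos
        omega
    set j := pos b c + 1 with hj
    have hPex : ∃ k, j < k ∧ k ≤ m ∧ sig s T b k < sig s T b j :=
      ⟨m, hjm, le_refl m, by rw [sig_m b hm hT]; omega⟩
    classical
    have hspec := Nat.find_spec hPex
    have hminp := fun i (hi : i < Nat.find hPex) => Nat.find_min hPex hi
    set k0 := Nat.find hPex with hk0
    obtain ⟨hk1, hk2, hk3⟩ := hspec
    have hmin : ∀ i, j ≤ i → i < k0 → sig s T b j ≤ sig s T b i := by
      intro i h1 h2
      rcases Nat.eq_or_lt_of_le h1 with h | h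
      · rw [← h]
      · have h3 := hminp i h2
        simp only [not_and, not_lt] at h3
        exact h3 h (by omega)
    have hw_lt : k0 - 1 < m := by omega
    set w : Fin m := b + ((k0 - 1 : ℕ) : Fin m) with hw
    have hposw : pos b w = k0 - 1 := pos_add_nat b hw_lt
    have hsig_w1 : sig s T b (pos b w + 1) = sig s T b k0 := by
      rw [hposw]
      congr 1
      omega
    have hwT : w ∉ T := by
      intro hwT
      have hstep := sig_succ s T b (k0 - 1)
      have hk01 : k0 - 1 + 1 = k0 := by omega
      rw [hk01] at hstep
      have hwtw : wt s T (b + ((k0 - 1 : ℕ) : Fin m)) = (s:ℤ) - 1 := by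
        rw [wt, if_pos (by rw [← hw]; exact hwT)]
      rw [hwtw] at hstep
      have h1 := hmin (k0 - 1) (by omega) (by omega)
      have hs1 : (1:ℤ) ≤ (s:ℤ) - 1 := by
        have : (2:ℤ) ≤ (s:ℤ) := by exact_mod_cast hs
        omega
      omega
    obtain ⟨hmT, hmlt, hmle, -, -⟩ := mtch_facts hg hwT
    have hx_le : pos b (mtch s T b w) ≤ pos b c := by
      by_contra hgt
      push_neg at hgt
      have h1 := hmin (pos b (mtch s T b w)) (by omega) (by omega)
      rw [hsig_w1] at hmle
      omega
    have hsep : Separates (blockOf s T b (mtch s T b w)) (b - 1) c := by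
      rw [sep_base_iff (b := b)]
      exact ⟨w, mem_blockOf.2 (Or.inr ⟨hwT, rfl⟩), mtch s T b w, self_mem_blockOf _,
        hx_le, by omega⟩
    exact hsf _ (Finset.mem_image_of_mem _ hmT) hsep
  · -- if level 0 then same face
    intro hlev B hB hsep
    obtain ⟨x, hxT, rfl⟩ := Finset.mem_image.1 hB
    rw [sep_base_iff (b := b)] at hsep
    obtain ⟨u, hu, w, hw, h1, h2⟩ := hsep
    have hpx_w : pos b x ≤ pos b w := pos_le_of_mem_blockOf hg hxT hw
    have hux : u ≠ x := by
      intro h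
      rw [h] at h2
      omega
    obtain ⟨-, hult, hule, hwin⟩ := block_elem hg hxT hu hux
    have := hwin (pos b c + 1) (by omega) (by omega)
    have := hg (pos b x)
    omega

/-- L2: leaders are unchanged when rebasing at an arc of level 0. -/
lemma pos_shift {q : ℕ} (hq : q < m) (b z : Fin m) :
    pos (b + (q : Fin m)) z = (m - q + pos b z) % m := by
  have h : z - (b + (q : Fin m)) = (z - b) - (q : Fin m) := by ring
  rw [pos, h, sub_val, Fin.val_natCast, Nat.mod_eq_of_lt hq]
  rfl

lemma leaders_shift (hg : Good s T b) {a' : Fin m}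
    (hz : sig s T b (pos b a' + 1) = 0) {x : Fin m} (hx : x ∈ T) :
    leadB (a' + 1) (blockOf s T b x) = x := by
  have hq_le : pos b a' + 1 ≤ m := pos_lt b a'
  set q := pos b a' + 1 with hqdef
  have hb' : a' + 1 = b + (q : Fin m) := by
    have h1 : a' = b + ((pos b a' : ℕ) : Fin m) := (base_add_pos b a').symm
    rw [h1, hqdef]
    push_cast
    ring
  rcases Nat.eq_or_lt_of_le hq_le with hqm | hqm
  · have : ((q : ℕ) : Fin m) = 0 := by
      rw [hqm]
      exact Fin.natCast_self m
    rw [hb', this, add_zero]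
    exact leadB_blockOf hg hx
  · have hdich : ∀ e ∈ blockOf s T b x, pos b e < q ∨ q ≤ pos b x := by
      intro e he
      by_contra hcon
      push_neg at hcon
      obtain ⟨he1, he2⟩ := hcon
      have hex : e ≠ x := by
        intro h
        rw [h] at he1
        omega
      obtain ⟨-, helt, hele, hwin⟩ := block_elem hg hx he hex
      have := hwin q (by omega) (by omega)
      have := hg (pos b x)
      omega
    rw [hb']
    apply leadB_eq_of (self_mem_blockOf x)
    intro e he hne
    have hlt : pos b x < pos b e := (block_elem hg hx he hne).2.1
    rw [pos_shift hqm, pos_shift hqm]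
    have hex := pos_lt b e
    have hxx := pos_lt b x
    rcases Nat.lt_or_ge (pos b x) q with hc | hc
    · -- then pos e < q as well
      rcases hdich e he with hd | hd
      · rw [Nat.mod_eq_of_lt (by omega), Nat.mod_eq_of_lt (by omega)]
        omega
      · omega
    · -- q ≤ pos x ≤ pos e
      have h1 : m - q + pos b x = (pos b x - q) + m := by omega
      have h2 : m - q + pos b e = (pos b e - q) + m := by omega
      rw [h1, h2, Nat.add_mod_right, Nat.add_mod_right,
        Nat.mod_eq_of_lt (by omega), Nat.mod_eq_of_lt (by omega)]
      omega

lemma leaders_shift_set (hg : Good s T b) {a' : Fin m}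
    (hz : sig s T b (pos b a' + 1) = 0) :
    Leaders (a' + 1) (construct s T b) = T := by
  rw [Leaders, construct, Finset.image_image]
  ext t
  simp only [Finset.mem_image, Function.comp_apply]
  constructor
  · rintro ⟨x, hx, rfl⟩
    rw [leaders_shift hg hz hx]
    exact hx
  · intro ht
    exact ⟨t, ht, leaders_shift hg hz ht⟩

/-- L3: an arc has level 0 iff its successor is a good base. -/
lemma good_iff_lev_zero (hm : m = s * n) (hT : T.card = n) (hg : Good s T b) (c : Fin m) :
    Good s T (c + 1) ↔ sig s T b (pos b c + 1) = 0 := by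
  have hq_le : pos b c + 1 ≤ m := pos_lt b c
  set q := pos b c + 1 with hqdef
  have hb' : c + 1 = b + (q : Fin m) := by
    have h1 : c = b + ((pos b c : ℕ) : Fin m) := (base_add_pos b c).symm
    rw [h1, hqdef]
    push_cast
    ring
  rw [hb']
  constructor
  · intro hgood
    have h1 := hgood (m - q)
    rw [sig_rot] at h1
    have h2 : q + (m - q) = m := by omega
    rw [h2, sig_m b hm hT] at h1
    have := hg q
    omega
  · intro hq0
    intro i
    rw [sig_rot, hq0, sub_zero, sig_mod b hm hT]
    exact hg _

end Faces

section Config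

variable {s n : ℕ} {P : Finset (Finset (Fin m))} {b : Fin m}

/-- abstract spider configuration over `Fin m`. -/
def Conf (s n : ℕ) (P : Finset (Finset (Fin m))) : Prop :=
  P.card = n ∧ (∀ B ∈ P, B.card = s) ∧
  (∀ B ∈ P, ∀ B' ∈ P, B ≠ B' → Disjoint B B') ∧
  (∀ x : Fin m, ∃ B ∈ P, x ∈ B) ∧
  (∀ B ∈ P, ∀ B' ∈ P, B ≠ B' → ¬ CrossSets B B')

lemma Conf.block_nonempty (hs : 2 ≤ s) (hP : Conf s n P) {B : Finset (Fin m)} (hB : B ∈ P) :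
    B.Nonempty := by
  rw [← Finset.card_pos, hP.2.1 B hB]
  omega

lemma Conf.block_unique (hP : Conf s n P) {B B' : Finset (Fin m)} (hB : B ∈ P) (hB' : B' ∈ P)
    {y : Fin m} (hy : y ∈ B) (hy' : y ∈ B') : B = B' := by
  by_contra hne
  exact Finset.disjoint_left.1 (hP.2.2.1 B hB B' hB' hne) hy hy'

lemma Conf.leadB_injOn (hs : 2 ≤ s) (hP : Conf s n P) {B B' : Finset (Fin m)}
    (hB : B ∈ P) (hB' : B' ∈ P) (h : leadB b B = leadB b B') : B = B' :=
  hP.block_unique hB hB' (leadB_mem (hP.block_nonempty hs hB))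
    (h ▸ leadB_mem (hP.block_nonempty hs hB'))

lemma Conf.leaders_card (hs : 2 ≤ s) (hP : Conf s n P) : (Leaders b P).card = n := by
  rw [Leaders, Finset.card_image_of_injOn
    (fun B hB B' hB' h => hP.leadB_injOn hs hB hB' h), hP.1]

lemma Conf.leadB_mem_leaders (hP : Conf s n P) {B : Finset (Fin m)} (hB : B ∈ P) :
    leadB b B ∈ Leaders b P := Finset.mem_image_of_mem _ hB

lemma Conf.nonleader (hs : 2 ≤ s) (hP : Conf s n P) {B : Finset (Fin m)} (hB : B ∈ P)
    {y : Fin m} (hy : y ∈ B) (hyl : y ≠ leadB b B) : y ∉ Leaders b P := by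
  intro hyT
  obtain ⟨B', hB', hB'e⟩ := Finset.mem_image.1 hyT
  have : B' = B := hP.block_unique hB' hB (hB'e ▸ leadB_mem (hP.block_nonempty hs hB')) hy
  exact hyl (hB'e ▸ this ▸ rfl)

/-- counting: within any set of points closed under taking leaders, nonleaders are at most
`s-1` per leader. -/
lemma count_le (hs : 2 ≤ s) (hP : Conf s n P) (V : Finset (Fin m))
    (H : ∀ z ∈ V, z ∉ Leaders b P → ∃ B ∈ P, z ∈ B ∧ leadB b B ∈ V) :
    (V.filter (fun z => z ∉ Leaders b P)).card ≤
      (s - 1) * (V.filter (fun z => z ∈ Leaders b P)).card := by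
  classical
  set D := P.filter (fun B => leadB b B ∈ V) with hD
  have hsub : V.filter (fun z => z ∉ Leaders b P) ⊆ D.biUnion (fun B => B.erase (leadB b B)) := by
    intro z hz
    obtain ⟨hzV, hzT⟩ := Finset.mem_filter.1 hz
    obtain ⟨B, hB, hzB, hlV⟩ := H z hzV hzT
    refine Finset.mem_biUnion.2 ⟨B, Finset.mem_filter.2 ⟨hB, hlV⟩, Finset.mem_erase.2 ⟨?_, hzB⟩⟩
    intro he
    exact hzT (he ▸ hP.leadB_mem_leaders hB)
  calc (V.filter (fun z => z ∉ Leaders b P)).card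
      ≤ (D.biUnion (fun B => B.erase (leadB b B))).card := Finset.card_le_card hsub
    _ ≤ ∑ B ∈ D, (B.erase (leadB b B)).card := Finset.card_biUnion_le
    _ ≤ ∑ B ∈ D, (s - 1) := by
        apply Finset.sum_le_sum
        intro B hB
        rw [Finset.card_erase_of_mem (leadB_mem (hP.block_nonempty hs (Finset.mem_filter.1 hB).1)),
          hP.2.1 B (Finset.mem_filter.1 hB).1]
    _ = (s - 1) * D.card := by rw [Finset.sum_const, smul_eq_mul, mul_comm]
    _ ≤ (s - 1) * (V.filter (fun z => z ∈ Leaders b P)).card := by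
        apply Nat.mul_le_mul_left
        apply Finset.card_le_card_of_injOn (leadB b)
        · intro B hB
          obtain ⟨hB1, hB2⟩ := Finset.mem_filter.1 hB
          exact Finset.mem_filter.2 ⟨hB2, hP.leadB_mem_leaders hB1⟩
        · intro B hB B' hB' h
          exact hP.leadB_injOn hs (Finset.mem_filter.1 hB).1 (Finset.mem_filter.1 hB').1 h

/-- strict counting: if some nonleader's leader is outside `V` while blocks led
inside `V` lie within `V`. -/
lemma count_exact (hs : 2 ≤ s) (hP : Conf s n P) (V : Finset (Fin m))
    (H1 : ∀ B ∈ P, leadB b B ∈ V → B ⊆ V)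
    {y : Fin m} {B0 : Finset (Fin m)} (hB0 : B0 ∈ P) (hyV : y ∈ V)
    (hyB0 : y ∈ B0) (hyT : y ∉ Leaders b P) (hl0 : leadB b B0 ∉ V) :
    (s - 1) * (V.filter (fun z => z ∈ Leaders b P)).card + 1 ≤
      (V.filter (fun z => z ∉ Leaders b P)).card := by
  classical
  set D := P.filter (fun B => leadB b B ∈ V) with hD
  set U := D.biUnion (fun B => B.erase (leadB b B)) with hU
  have hUsub : U ⊆ V.filter (fun z => z ∉ Leaders b P) := by
    intro e he
    obtain ⟨B, hBD, heB⟩ := Finset.mem_biUnion.1 he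
    obtain ⟨hBP, hBl⟩ := Finset.mem_filter.1 hBD
    obtain ⟨hel, heB'⟩ := Finset.mem_erase.1 heB
    exact Finset.mem_filter.2 ⟨H1 B hBP hBl heB', hP.nonleader hs hBP heB' hel⟩
  have hyU : y ∉ U := by
    intro hyU
    obtain ⟨B, hBD, hyB⟩ := Finset.mem_biUnion.1 hyU
    obtain ⟨hBP, hBl⟩ := Finset.mem_filter.1 hBD
    have : B = B0 := hP.block_unique hBP hB0 (Finset.mem_erase.1 hyB).2 hyB0
    exact hl0 (this ▸ hBl)
  have hins : insert y U ⊆ V.filter (fun z => z ∉ Leaders b P) := by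
    intro e he
    rcases Finset.mem_insert.1 he with rfl | he
    · exact Finset.mem_filter.2 ⟨hyV, hyT⟩
    · exact hUsub he
  have hUcard : U.card = (s - 1) * D.card := by
    rw [hU, Finset.card_biUnion]
    · rw [Finset.sum_congr rfl (fun B hB => ?_), Finset.sum_const, smul_eq_mul, mul_comm]
      rw [Finset.card_erase_of_mem (leadB_mem (hP.block_nonempty hs (Finset.mem_filter.1 hB).1)),
        hP.2.1 B (Finset.mem_filter.1 hB).1]
    · intro B hB B' hB' hne
      apply Finset.disjoint_of_subset_left (Finset.erase_subset _ _)
      apply Finset.disjoint_of_subset_right (Finset.erase_subset _ _)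
      exact hP.2.2.1 B (Finset.mem_filter.1 hB).1 B' (Finset.mem_filter.1 hB').1 hne
  have hDcard : D.card = (V.filter (fun z => z ∈ Leaders b P)).card := by
    apply Finset.card_bij (fun B _ => leadB b B)
    · intro B hB
      obtain ⟨hB1, hB2⟩ := Finset.mem_filter.1 hB
      exact Finset.mem_filter.2 ⟨hB2, hP.leadB_mem_leaders hB1⟩
    · intro B hB B' hB' h
      exact hP.leadB_injOn hs (Finset.mem_filter.1 hB).1 (Finset.mem_filter.1 hB').1 h
    · intro x hx
      obtain ⟨hxV, hxT⟩ := Finset.mem_filter.1 hx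
      obtain ⟨B, hB, hBe⟩ := Finset.mem_image.1 hxT
      exact ⟨B, Finset.mem_filter.2 ⟨hB, hBe ▸ hxV⟩, hBe⟩
  calc (s - 1) * (V.filter (fun z => z ∈ Leaders b P)).card + 1
      = U.card + 1 := by rw [hUcard, hDcard]
    _ = (insert y U).card := (Finset.card_insert_of_notMem hyU).symm
    _ ≤ _ := Finset.card_le_card hins

end Config

section MatchChar

variable {s n : ℕ} {P : Finset (Finset (Fin m))} {b : Fin m}

lemma cast_sub_one {s : ℕ} (hs : 1 ≤ s) : ((s - 1 : ℕ) : ℤ) = (s : ℤ) - 1 := by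
  push_cast [Nat.cast_sub hs]
  ring

lemma win_filters (b : Fin m) (T : Finset (Fin m)) (j k : ℕ) :
    ((win b j k).filter (fun z => z ∉ T)) = ((win (m := m) b j k).filter (fun z => z ∉ T)) := rfl

/-- leaders of a configuration form a good base sequence. -/
lemma Conf.good (hs : 2 ≤ s) (hm : m = s * n) (hP : Conf s n P) (b : Fin m) :
    Good s (Leaders b P) b := by
  have hT : (Leaders b P).card = n := hP.leaders_card hs
  have hgood_le : ∀ j, j ≤ m → 0 ≤ sig s (Leaders b P) b j := by
    intro j hj
    have hcard := sig_as_card s (Leaders b P) b (Nat.zero_le j) hj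
    rw [sig_zero, sub_zero] at hcard
    have hcount := count_le (b := b) hs hP (win b 0 j) ?_
    · rw [hcard]
      have h1 : ((s - 1 : ℕ) : ℤ) = (s : ℤ) - 1 := cast_sub_one (by omega)
      have h2 : (((win b 0 j).filter (fun z => z ∉ Leaders b P)).card : ℤ) ≤
          ((s - 1 : ℕ) : ℤ) * (((win b 0 j).filter (fun z => z ∈ Leaders b P)).card : ℤ) := by
        exact_mod_cast hcount
      rw [h1] at h2
      omega
    · intro z hz hzT
      obtain ⟨B, hB, hzB⟩ := hP.2.2.2.1 z
      refine ⟨B, hB, hzB, ?_⟩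
      rw [mem_win] at hz ⊢
      have := leadB_le (b := b) (hP.block_nonempty hs hB) hzB
      omega
  intro j
  rw [sig_mod b hm hT j]
  exact hgood_le _ (le_of_lt (Nat.mod_lt _ m_pos))

/-- the matching characterization: any configuration equals the constructed one from
its leaders. -/
lemma Conf.eq_construct (hs : 2 ≤ s) (hm : m = s * n) (hP : Conf s n P) (b : Fin m) :
    construct s (Leaders b P) b = P := by
  set T := Leaders b P with hTdef
  have hT : T.card = n := hP.leaders_card hs
  have hg : Good s T b := hP.good hs hm b
  -- step 1: each block `B ∈ P` equals `blockOf (leadB b B)`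
  have hstep : ∀ B ∈ P, blockOf s T b (leadB b B) = B := by
    intro B hB
    set x := leadB b B with hx
    have hxB : x ∈ B := leadB_mem (hP.block_nonempty hs hB)
    have hxT : x ∈ T := hP.leadB_mem_leaders hB
    have hmain : ∀ y ∈ B, y ≠ x → (y ∉ T ∧ mtch s T b y = x) := by
      intro y hyB hyne
      have hyT : y ∉ T := hP.nonleader hs hB hyB hyne
      have hpxy : pos b x < pos b y := by
        have h1 := leadB_le (b := b) (hP.block_nonempty hs hB) hyB
        rw [← hx] at h1
        have h2 : pos b x ≠ pos b y := fun hc => hyne (pos_inj hc).symm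
        omega
      -- (a) : sig (pos x) ≤ sig (pos y + 1)
      have hwa : 0 ≤ sig s T b (pos b y + 1) - sig s T b (pos b x) := by
        have hcard := sig_as_card s T b (j := pos b x) (k := pos b y + 1)
          (by omega) (pos_lt b y)
        have hcount := count_le (b := b) hs hP (win b (pos b x) (pos b y + 1)) ?_
        · rw [hcard]
          have h1 : ((s - 1 : ℕ) : ℤ) = (s : ℤ) - 1 := cast_sub_one (by omega)
          have h2 : (((win b (pos b x) (pos b y + 1)).filter (fun z => z ∉ T)).card : ℤ) ≤
              ((s - 1 : ℕ) : ℤ) *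
                (((win b (pos b x) (pos b y + 1)).filter (fun z => z ∈ T)).card : ℤ) := by
            exact_mod_cast hcount
          rw [h1] at h2
          omega
        · intro z hz hzT
          obtain ⟨B', hB', hzB'⟩ := hP.2.2.2.1 z
          refine ⟨B', hB', hzB', ?_⟩
          rw [mem_win] at hz ⊢
          have hlead_le := leadB_le (b := b) (hP.block_nonempty hs hB') hzB'
          refine ⟨?_, by omega⟩
          by_contra hlow
          push_neg at hlow
          -- crossing: leadB B' < x < z < y
          have hBne : B' ≠ B := by
            intro he
            rw [he, ← hx] at hlead_le hlow
            omega
          have hzny : z ≠ y := by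
            intro he
            exact hBne (hP.block_unique hB' hB (he ▸ hzB') hyB)
          have hznx : z ≠ x := fun he => hzT (he ▸ hxT)
          have hcross := crossSets_of_pos b (A := B') (B := B)
            (leadB_mem (b := b) (hP.block_nonempty hs hB')) hzB' hxB hyB
            (by omega) (by have : pos b z ≠ pos b x := fun hc => hznx (pos_inj hc); omega)
            (by have : pos b z ≠ pos b y := fun hc => hzny (pos_inj hc); omega)
          exact hP.2.2.2.2 B' hB' B hB hBne hcross
      -- (b) : ∀ i ∈ (pos x, pos y], sig (pos y + 1) < sig i
      have hwb : ∀ i, pos b x < i → i ≤ pos b y → sig s T b (pos b y + 1) < sig s T b i := by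
        intro i hi1 hi2
        have hcard := sig_as_card s T b (j := i) (k := pos b y + 1) (by omega) (pos_lt b y)
        have hyV : y ∈ win b i (pos b y + 1) := mem_win.2 ⟨by omega, by omega⟩
        have hxV : x ∉ win b i (pos b y + 1) := by
          rw [mem_win]
          omega
        have hcount := count_exact (b := b) hs hP (win b i (pos b y + 1)) ?_ hB hyV hyB hyT
          (by rw [← hx]; exact hxV)
        · have h1 : ((s - 1 : ℕ) : ℤ) = (s : ℤ) - 1 := cast_sub_one (by omega)
          have h2 : ((s - 1 : ℕ) : ℤ) *
                (((win b i (pos b y + 1)).filter (fun z => z ∈ T)).card : ℤ) + 1 ≤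
              (((win b i (pos b y + 1)).filter (fun z => z ∉ T)).card : ℤ) := by
            exact_mod_cast hcount
          rw [h1] at h2
          omega
        · -- blocks led inside the window lie inside it
          intro B' hB' hl'V e heB'
          rw [mem_win] at hl'V ⊢
          have hlead_le := leadB_le (b := b) (hP.block_nonempty hs hB') heB'
          refine ⟨by omega, ?_⟩
          by_contra hhigh
          push_neg at hhigh
          have hBne : B' ≠ B := by
            intro he
            rw [he, ← hx] at hl'V
            omega
          have hlny : leadB b B' ≠ y := by
            intro he
            exact hyT (he ▸ hP.leadB_mem_leaders hB')
          have hcross := crossSets_of_pos b (A := B) (B := B') hxB hyB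
            (leadB_mem (b := b) (hP.block_nonempty hs hB')) heB'
            (by omega)
            (by have : pos b (leadB b B') ≠ pos b y := fun hc => hlny (pos_inj hc); omega)
            (by omega)
          exact hP.2.2.2.2 B hB B' hB' (Ne.symm hBne) hcross
      -- conclude mtch y = x
      refine ⟨hyT, ?_⟩
      have hjs : jstar s T b (pos b y) = pos b x := by
        rw [jstar, Nat.findGreatest_eq_iff]
        refine ⟨by omega, fun _ => by omega, ?_⟩
        intro i hi1 hi2
        have := hwb i hi1 hi2
        omega
      rw [mtch, hjs, base_add_pos]
    -- both inclusions
    apply (Finset.eq_of_subset_of_card_le ?_ ?_).symm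
    · intro y hyB
      by_cases hy : y = x
      · rw [hy]; exact self_mem_blockOf x
      · exact mem_blockOf.2 (Or.inr (hmain y hyB hy))
    · rw [card_blockOf hs hm hT hg hxT, hP.2.1 B hB]
  -- step 2: equality of the two configurations
  apply Finset.eq_of_subset_of_card_le
  · intro B hB
    obtain ⟨x, hxT, rfl⟩ := Finset.mem_image.1 hB
    obtain ⟨B', hB', hBe⟩ := Finset.mem_image.1 hxT
    rw [← hBe, hstep B' hB']
    exact hB'
  · rw [card_construct hg hT, hP.1]

end MatchChar

section Assemble

variable {s n : ℕ} {T : Finset (Fin m)} {b : Fin m}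

lemma construct_conf (hs : 2 ≤ s) (hm : m = s * n) (hT : T.card = n) (hg : Good s T b) :
    Conf s n (construct s T b) := by
  refine ⟨card_construct hg hT, ?_, ?_, ?_, ?_⟩
  · intro B hB
    obtain ⟨x, hx, rfl⟩ := Finset.mem_image.1 hB
    exact card_blockOf hs hm hT hg hx
  · intro B hB B' hB' hne
    obtain ⟨x, hx, rfl⟩ := Finset.mem_image.1 hB
    obtain ⟨x', hx', rfl⟩ := Finset.mem_image.1 hB'
    exact blockOf_disj hg hx hx' (fun h => hne (h ▸ rfl))
  · intro z
    obtain ⟨x, hx, hz⟩ := blockOf_cover hg z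
    exact ⟨blockOf s T b x, Finset.mem_image_of_mem _ hx, hz⟩
  · intro B hB B' hB' hne
    obtain ⟨x, hx, rfl⟩ := Finset.mem_image.1 hB
    obtain ⟨x', hx', rfl⟩ := Finset.mem_image.1 hB'
    exact noncross_construct hg hx hx' hne

lemma leaders_construct (hg : Good s T b) : Leaders b (construct s T b) = T := by
  rw [Leaders, construct, Finset.image_image]
  ext t
  simp only [Finset.mem_image, Function.comp_apply]
  constructor
  · rintro ⟨x, hx, rfl⟩
    rw [leadB_blockOf hg hx]
    exact hx
  · intro ht
    exact ⟨t, ht, leadB_blockOf hg ht⟩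

lemma pos_base_sub_one (b : Fin m) : pos b (b - 1) = m - 1 := by
  rw [pos]
  have h : b - 1 - b = 0 - 1 := by ring
  rw [h, sub_val]
  simp only [Fin.val_zero, Fin.val_one']
  have hm1 : 0 < m := m_pos
  rcases Nat.eq_or_lt_of_le hm1 with h1 | h1
  · simp [← h1]
  · rw [Nat.mod_eq_of_lt h1, Nat.mod_eq_of_lt (by omega)]
    omega

lemma sig_base_arc (hm : m = s * n) (hT : T.card = n) :
    sig s T b (pos b (b - 1) + 1) = 0 := by
  rw [pos_base_sub_one]
  have h1 : m - 1 + 1 = m := by have := m_pos (m := m); omega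
  rw [h1]
  exact sig_m b hm hT

noncomputable def goodBase (s : ℕ) (T : Finset (Fin m)) : Fin m := by
  classical
  exact if h : ∃ b : Fin m, Good s T b then h.choose else 0

lemma goodBase_good (hm : m = s * n) (hT : T.card = n) : Good s T (goodBase s T) := by
  have h : ∃ b : Fin m, Good s T b := exists_good hm hT
  rw [goodBase]
  simp only [dif_pos h]
  convert h.choose_spec

noncomputable def Psi (s : ℕ) (T : Finset (Fin m)) :
    Finset (Finset (Fin m)) × Set (Fin m) :=
  (construct s T (goodBase s T), {c | Good s T (c + 1)})

lemma psi_mapsTo (hs : 2 ≤ s) (hm : m = s * n) (hT : T.card = n) :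
    Conf s n (Psi s T).1 ∧ (Psi s T).2 ∈ Faces (Psi s T).1 := by
  have hg : Good s T (goodBase s T) := goodBase_good hm hT
  refine ⟨construct_conf hs hm hT hg, ?_⟩
  refine ⟨goodBase s T - 1, ?_⟩
  ext c
  show Good s T (c + 1) ↔ SameFace (construct s T (goodBase s T)) (goodBase s T - 1) c
  rw [good_iff_lev_zero hm hT hg c, ← sameFace_construct_iff hs hm hT hg c]

lemma psi_inj (hs : 2 ≤ s) (hm : m = s * n) {T T' : Finset (Fin m)}
    (hT : T.card = n) (hT' : T'.card = n) (h : Psi s T = Psi s T') : T = T' := by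
  set b := goodBase s T with hbdef
  set b' := goodBase s T' with hb'def
  have hg : Good s T b := goodBase_good hm hT
  have hg' : Good s T' b' := goodBase_good hm hT'
  have hfst : construct s T b = construct s T' b' := congrArg Prod.fst h
  have hsnd : {c : Fin m | Good s T (c + 1)} = {c : Fin m | Good s T' (c + 1)} :=
    congrArg Prod.snd h
  have hb1 : Good s T ((b - 1) + 1) := by
    rw [sub_add_cancel]
    exact hg
  have hb2 : Good s T' ((b - 1) + 1) := by
    have := (Set.ext_iff.1 hsnd (b - 1)).1 hb1
    exact this
  -- leaders of the common configuration at base b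
  have hL1 : Leaders b (construct s T b) = T := leaders_construct hg
  have hL2 : Leaders b (construct s T' b') = T' := by
    have hz : sig s T' b' (pos b' (b - 1) + 1) = 0 := by
      rw [← good_iff_lev_zero hm hT' hg' (b - 1)]
      exact hb2
    have := leaders_shift_set hg' hz
    rw [sub_add_cancel] at this
    exact this
  rw [← hL1, hfst, hL2]

lemma psi_surj (hs : 2 ≤ s) (hm : m = s * n) {P : Finset (Finset (Fin m))}
    {R : Set (Fin m)} (hP : Conf s n P) (hR : R ∈ Faces P) :
    ∃ T : Finset (Fin m), T.card = n ∧ Psi s T = (P, R) := by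
  obtain ⟨a0, rfl⟩ := hR
  set b := a0 + 1 with hb
  have ha0 : a0 = b - 1 := by rw [hb]; ring
  set T := Leaders b P with hT
  have hTcard : T.card = n := hP.leaders_card hs
  have hgb : Good s T b := hP.good hs hm b
  have hPc : construct s T b = P := hP.eq_construct hs hm b
  refine ⟨T, hTcard, ?_⟩
  have hgT : Good s T (goodBase s T) := goodBase_good hm hTcard
  -- first component
  have hLT : Leaders (goodBase s T) P = T := by
    have hz : sig s T b (pos b (goodBase s T - 1) + 1) = 0 := by
      rw [← good_iff_lev_zero hm hTcard hgb (goodBase s T - 1), sub_add_cancel]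
      exact hgT
    have h1 := leaders_shift_set hgb hz
    rw [sub_add_cancel, hPc] at h1
    exact h1
  have hfst : construct s T (goodBase s T) = P := by
    have := hP.eq_construct hs hm (goodBase s T)
    rw [hLT] at this
    exact this
  have hsnd : {c : Fin m | Good s T (c + 1)} = {c : Fin m | SameFace P a0 c} := by
    ext c
    simp only [Set.mem_setOf_eq]
    rw [good_iff_lev_zero hm hTcard hgb c, ← sameFace_construct_iff hs hm hTcard hgb c, hPc,
      ← ha0]
  rw [Psi, hfst, Prod.mk.injEq]
  exact ⟨rfl, hsnd⟩

end Assemble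

end Spider

/-- `|A(s,n)| = C(sn, n)`: the number of configurations of `n`
non-intersecting `s`-spiders in an annulus with `sn` points on its external boundary,
i.e. of pairs `(P, R)` of a non-crossing partition of the `sn` cyclic points into `n`
blocks of size `s` together with a choice of one of the regions into which the
corresponding spiders dissect the disc, equals the binomial coefficient `C(sn, n)`. -/
theorem card_A_eq (s n : ℕ) (hs : 2 ≤ s) (hn : 1 ≤ n) :
    {p : Finset (Finset (Fin (s * n))) × Set (Fin (s * n)) |
        IsSpiderConfig s n p.1 ∧ p.2 ∈ Faces p.1}.ncard =
      Nat.choose (s * n) n := by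
  haveI : NeZero (s * n) := ⟨Nat.mul_ne_zero (by omega) (by omega)⟩
  have himg : {p : Finset (Finset (Fin (s * n))) × Set (Fin (s * n)) |
        IsSpiderConfig s n p.1 ∧ p.2 ∈ Faces p.1} =
      (Spider.Psi s) '' {T : Finset (Fin (s * n)) | T.card = n} := by
    ext p
    simp only [Set.mem_setOf_eq, Set.mem_image]
    constructor
    · rintro ⟨h1, h2⟩
      obtain ⟨T, hTc, hPsi⟩ := Spider.psi_surj hs rfl (show Spider.Conf s n p.1 from h1) h2
      exact ⟨T, hTc, hPsi.trans (Prod.mk.eta)⟩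
    · rintro ⟨T, hTc, rfl⟩
      obtain ⟨hc, hf⟩ := Spider.psi_mapsTo hs rfl hTc
      exact ⟨hc, hf⟩
  have hinj : Set.InjOn (Spider.Psi s) {T : Finset (Fin (s * n)) | T.card = n} := by
    intro T hT T' hT' h
    exact Spider.psi_inj hs rfl hT hT' h
  rw [himg, Set.ncard_image_of_injOn hinj]
  have hset : {T : Finset (Fin (s * n)) | T.card = n} =
      ↑(Finset.univ.powersetCard n : Finset (Finset (Fin (s * n)))) := by
    ext T
    simp [Finset.mem_powersetCard, Finset.subset_univ]
  rw [hset, Set.ncard_coe_finset, Finset.card_powersetCard, Finset.card_univ, Fintype.card_fin]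
end
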